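/- arXiv:2107.08179 — 7 statements merged into one kernel-verified Lean document; each statement's English description precedes it below -/
import Mathlib

section
/- Let (Ω, 𝓕) be a measurable space, P a probability measure on Ω, and f : Ω → ℝ a measurable function that is P-integrable, with centered version f̄ := f − E_P[f]. Let Q be a probability measure on Ω with Q ≪ P, kl(Q‖P) = η < ∞, and f Q-integrable. Then − inf_{c>0} [ (1/c)·log E_P[exp(−c·f̄)] + η/c ] ≤ E_Q[f] − E_P[f] ≤ inf_{c>0} [ (1/c)·log E_P[exp(c·f̄)] + η/c ], where each infimum is taken over real c > 0 and the expression is interpreted as +∞ (resp. −∞ on the left) at those c where the exponential moment is infinite. -/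
open MeasureTheory Real Filter Set
open scoped Classical

/-- The Kullback–Leibler divergence `kl(Q‖P)`: equal to `∫ log (dQ/dP) dQ` when `Q ≪ P`
and the log-likelihood ratio is `Q`-integrable, and `+∞` otherwise. -/
noncomputable def klDiv {Ω : Type*} [MeasurableSpace Ω] (Q P : Measure Ω) : EReal :=
  if Q ≪ P ∧ Integrable (llr Q P) Q then ((∫ ω, llr Q P ω ∂Q : ℝ) : EReal) else ⊤

/-- The expression `(1/c) log E_P[exp(c·g)] + η/c`, interpreted as `+∞` at those `c`
where the exponential moment is infinite. -/
noncomputable def uqObj {Ω : Type*} [MeasurableSpace Ω] (P : Measure Ω) (g : Ω → ℝ)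
    (η c : ℝ) : EReal :=
  if Integrable (fun ω => Real.exp (c * g ω)) P then
    (((1 / c) * Real.log (∫ ω, Real.exp (c * g ω) ∂P) + η / c : ℝ) : EReal)
  else ⊤

lemma my_integral_llr_nonneg {Ω : Type*} [MeasurableSpace Ω] {μ ν : Measure Ω}
    [IsProbabilityMeasure μ] [IsProbabilityMeasure ν] (hμν : μ ≪ ν)
    (h_int : Integrable (llr μ ν) μ) : 0 ≤ ∫ x, llr μ ν x ∂μ := by
  have hlin : ∫⁻ x, (μ.rnDeriv ν x)⁻¹ ∂μ ≤ 1 := by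
    rw [← lintegral_rnDeriv_mul hμν (f := fun x => (μ.rnDeriv ν x)⁻¹) (μ.measurable_rnDeriv ν).inv.aemeasurable]
    calc ∫⁻ x, μ.rnDeriv ν x * (μ.rnDeriv ν x)⁻¹ ∂ν ≤ ∫⁻ _, 1 ∂ν :=
          lintegral_mono fun x => ENNReal.mul_inv_le_one _
      _ = 1 := by simp
  have hint_h : Integrable (fun x => ((μ.rnDeriv ν x)⁻¹).toReal) μ :=
    integrable_toReal_of_lintegral_ne_top (μ.measurable_rnDeriv ν).inv.aemeasurable
      (lt_of_le_of_lt hlin ENNReal.one_lt_top).ne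
  have hIle : ∫ x, ((μ.rnDeriv ν x)⁻¹).toReal ∂μ ≤ 1 := by
    rw [integral_toReal (f := fun x => (μ.rnDeriv ν x)⁻¹) (μ.measurable_rnDeriv ν).inv.aemeasurable]
    · exact_mod_cast ENNReal.toReal_mono (by simp) hlin
    · filter_upwards [Measure.rnDeriv_pos hμν] with x hx
      simp [ENNReal.inv_lt_top, hx]
  have hae : ∀ᵐ x ∂μ, 1 - llr μ ν x ≤ ((μ.rnDeriv ν x)⁻¹).toReal := by
    filter_upwards [Measure.rnDeriv_pos hμν, hμν.ae_le (Measure.rnDeriv_lt_top μ ν)]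
      with x hpos hlt
    have hr : 0 < ((μ.rnDeriv ν x)).toReal := ENNReal.toReal_pos hpos.ne' hlt.ne
    calc 1 - llr μ ν x = -llr μ ν x + 1 := by ring
      _ ≤ Real.exp (-llr μ ν x) := Real.add_one_le_exp _
      _ = ((μ.rnDeriv ν x).toReal)⁻¹ := by rw [llr, Real.exp_neg, Real.exp_log hr]
      _ = ((μ.rnDeriv ν x)⁻¹).toReal := (ENNReal.toReal_inv _).symm
  have h4 : ∫ x, (1 - llr μ ν x) ∂μ ≤ ∫ x, ((μ.rnDeriv ν x)⁻¹).toReal ∂μ :=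
    integral_mono_ae ((integrable_const 1).sub h_int) hint_h hae
  rw [integral_sub (integrable_const 1) h_int] at h4
  simp only [integral_const, measure_univ, probReal_univ, ENNReal.toReal_one, smul_eq_mul, one_mul] at h4
  linarith

lemma uq_key {Ω : Type*} [MeasurableSpace Ω] (P Q : Measure Ω)
    [IsProbabilityMeasure P] [IsProbabilityMeasure Q] (g : Ω → ℝ)
    (hgQ : Integrable g Q) (hQP : Q ≪ P) (hllr : Integrable (llr Q P) Q)
    (η : ℝ) (hη : ∫ x, llr Q P x ∂Q = η) :
    ((∫ x, g x ∂Q : ℝ) : EReal) ≤ ⨅ c ∈ Set.Ioi (0 : ℝ), uqObj P g η c := by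
  refine le_iInf₂ fun c hc => ?_
  by_cases hint : Integrable (fun ω => Real.exp (c * g ω)) P
  · rw [uqObj, if_pos hint, EReal.coe_le_coe_iff]
    set Z := ∫ ω, Real.exp (c * g ω) ∂P with hZ
    set ν := P.tilted (fun x => c * g x) with hν
    have hprob : IsProbabilityMeasure ν := isProbabilityMeasure_tilted hint
    have hQν : Q ≪ ν := hQP.trans (absolutelyContinuous_tilted hint)
    have hcg : Integrable (fun x => c * g x) Q := hgQ.const_mul c
    have h1 := integral_llr_tilted_right hQP hcg hint hllr
    have h2 : Integrable (llr Q ν) Q := integrable_llr_tilted_right hQP hcg hllr hint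
    have h0 := my_integral_llr_nonneg hQν h2
    rw [h1, hη, integral_const_mul] at h0
    have hc' : (0 : ℝ) < c := hc
    have hI : c * ∫ x, g x ∂Q ≤ Real.log Z + η := by linarith
    calc ∫ x, g x ∂Q = (c * ∫ x, g x ∂Q) / c := by field_simp
      _ ≤ (Real.log Z + η) / c := div_le_div_of_nonneg_right hI hc'.le
      _ = 1 / c * Real.log Z + η / c := by ring
  · rw [uqObj, if_neg hint]; exact le_top

/-- **Goal-oriented UQ information inequality** (Lemma A.1): for probability measures
`Q ≪ P` with `kl(Q‖P) = η < ∞` and an integrable QoI `f` with centered version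
`f̄ = f − E_P[f]`,
`−inf_{c>0}[(1/c) log E_P[e^{−c f̄}] + η/c] ≤ E_Q[f] − E_P[f]
  ≤ inf_{c>0}[(1/c) log E_P[e^{c f̄}] + η/c]`. -/
theorem uq_information_inequality {Ω : Type*} [MeasurableSpace Ω]
    (P Q : Measure Ω) [IsProbabilityMeasure P] [IsProbabilityMeasure Q]
    (f : Ω → ℝ) (hf : Measurable f) (hfP : Integrable f P) (hfQ : Integrable f Q)
    (hQP : Q ≪ P) (η : ℝ) (hη : klDiv Q P = (η : EReal)) :
    -(⨅ c ∈ Set.Ioi (0 : ℝ), uqObj P (fun ω => -(f ω - ∫ x, f x ∂P)) η c)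
        ≤ ((∫ x, f x ∂Q - ∫ x, f x ∂P : ℝ) : EReal) ∧
    ((∫ x, f x ∂Q - ∫ x, f x ∂P : ℝ) : EReal)
        ≤ ⨅ c ∈ Set.Ioi (0 : ℝ), uqObj P (fun ω => f ω - ∫ x, f x ∂P) η c := by
  have hcond : Q ≪ P ∧ Integrable (llr Q P) Q := by
    by_contra h
    rw [klDiv, if_neg h] at hη
    exact (EReal.top_ne_coe η) hη
  have hη' : ∫ x, llr Q P x ∂Q = η := by
    rw [klDiv, if_pos hcond] at hη
    exact_mod_cast hη
  set g : Ω → ℝ := fun ω => f ω - ∫ x, f x ∂P with hg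
  have hgQ : Integrable g Q := hfQ.sub (integrable_const _)
  have hIg : ∫ x, g x ∂Q = ∫ x, f x ∂Q - ∫ x, f x ∂P := by
    rw [hg, integral_sub hfQ (integrable_const _)]
    simp
  constructor
  · have h := uq_key P Q (fun ω => -(g ω)) hgQ.neg hQP hcond.2 η hη'
    rw [integral_neg, hIg] at h
    rw [EReal.coe_neg] at h
    have h2 := EReal.neg_le_neg_iff.mpr h
    rwa [neg_neg] at h2
  · have h := uq_key P Q g hgQ hQP hcond.2 η hη'
    rwa [hIg] at h
end

section
/- Let P be a probability measure on Ω and f : Ω → ℝ a P-integrable measurable function, not P-a.s. constant, with centered version f̄ := f − E_P[f]. Let (d₋, d₊) with d₋ < 0 < d₊ be the largest open interval on which Λ(c) := log E_P[exp(c·f̄)] is finite, and set η₊ := lim_{c ↗ d₊} ( c·Λ′(c) − Λ(c) ) ∈ (0, ∞]. Then for every η with 0 < η < η₊, the optimization problem inf_{c ∈ (0, d₊)} (Λ(c) + η)/c has a unique minimizer c₊ = c₊(η) ∈ (0, d₊), and c₊ is the unique solution in (0, d₊) of the equation c·Λ′(c) − Λ(c) = η. -/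
open MeasureTheory Real Filter Set
open scoped Classical

private lemma exp_mul_le_add {a b t : ℝ} (x : ℝ) (hat : a ≤ t) (htb : t ≤ b) :
    Real.exp (t * x) ≤ Real.exp (a * x) + Real.exp (b * x) := by
  rcases le_or_gt 0 x with hx | hx
  · have h : t * x ≤ b * x := mul_le_mul_of_nonneg_right htb hx
    calc Real.exp (t * x) ≤ Real.exp (b * x) := Real.exp_le_exp.2 h
      _ ≤ _ := le_add_of_nonneg_left (Real.exp_nonneg _)
  · have h : t * x ≤ a * x := mul_le_mul_of_nonpos_right hat hx.le
    calc Real.exp (t * x) ≤ Real.exp (a * x) := Real.exp_le_exp.2 h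
      _ ≤ _ := le_add_of_nonneg_right (Real.exp_nonneg _)

private lemma pow_le_factorial_mul_exp (n : ℕ) {x : ℝ} (hx : 0 ≤ x) :
    x ^ n ≤ n.factorial * Real.exp x := by
  have h := Real.sum_le_exp_of_nonneg hx (n + 1)
  have h2 : x ^ n / n.factorial ≤ ∑ i ∈ Finset.range (n + 1), x ^ i / i.factorial :=
    Finset.single_le_sum (f := fun i => x ^ i / (i.factorial : ℝ))
      (fun i _ => by positivity) (Finset.self_mem_range_succ n)
  have hfac : (0 : ℝ) < n.factorial := by positivity
  have := h2.trans h
  rw [div_le_iff₀ hfac] at this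
  linarith [this]

private lemma integrable_abs_pow_mul_exp {Ω : Type*} [MeasurableSpace Ω] (P : Measure Ω)
    (g : Ω → ℝ) (hg : Measurable g) (n : ℕ) {a b c : ℝ}
    (ha : Integrable (fun ω => Real.exp (a * g ω)) P)
    (hb : Integrable (fun ω => Real.exp (b * g ω)) P)
    (hac : a < c) (hcb : c < b) :
    Integrable (fun ω => |g ω| ^ n * Real.exp (c * g ω)) P := by
  set δ : ℝ := min (c - a) (b - c) with hδdef
  have hδ : 0 < δ := lt_min (by linarith) (by linarith)
  have hδa : a ≤ c - δ := by
    have := min_le_left (c - a) (b - c); rw [← hδdef] at this; linarith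
  have hδb : c + δ ≤ b := by
    have := min_le_right (c - a) (b - c); rw [← hδdef] at this; linarith
  have key : ∀ x : ℝ, |x| ^ n * Real.exp (c * x)
      ≤ (n.factorial / δ ^ n) * (Real.exp (a * x) + Real.exp (b * x)) := by
    intro x
    have h1 : (δ * |x|) ^ n ≤ n.factorial * Real.exp (δ * |x|) :=
      pow_le_factorial_mul_exp n (by positivity)
    have h2 : |x| ^ n ≤ (n.factorial / δ ^ n) * Real.exp (δ * |x|) := by
      rw [mul_pow] at h1
      rw [div_mul_eq_mul_div, le_div_iff₀ (by positivity)]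
      nlinarith [h1]
    have h3 : Real.exp (δ * |x|) * Real.exp (c * x) ≤ Real.exp (a * x) + Real.exp (b * x) := by
      rw [← Real.exp_add]
      rcases le_or_gt 0 x with hx | hx
      · rw [abs_of_nonneg hx, show δ * x + c * x = (c + δ) * x by ring]
        exact exp_mul_le_add x (by linarith) hδb
      · rw [abs_of_neg hx, show δ * -x + c * x = (c - δ) * x by ring]
        exact exp_mul_le_add x hδa (by linarith)
    calc |x| ^ n * Real.exp (c * x)
        ≤ ((n.factorial / δ ^ n) * Real.exp (δ * |x|)) * Real.exp (c * x) := by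
          exact mul_le_mul_of_nonneg_right h2 (Real.exp_nonneg _)
      _ = (n.factorial / δ ^ n) * (Real.exp (δ * |x|) * Real.exp (c * x)) := by ring
      _ ≤ _ := by
          refine mul_le_mul_of_nonneg_left h3 (by positivity)
  have hbound : Integrable
      (fun ω => (n.factorial / δ ^ n) * (Real.exp (a * g ω) + Real.exp (b * g ω))) P :=
    (ha.add hb).const_mul _
  refine hbound.mono ?_ (Eventually.of_forall fun ω => ?_)
  · exact ((hg.abs.pow_const n).mul ((hg.const_mul c).exp)).aestronglyMeasurable
  · have hB : 0 ≤ (n.factorial / δ ^ n : ℝ) * (Real.exp (a * g ω) + Real.exp (b * g ω)) :=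
      mul_nonneg (div_nonneg (by positivity) (pow_pos hδ n).le) (by positivity)
    rw [Real.norm_eq_abs, Real.norm_eq_abs,
      abs_of_nonneg (show (0:ℝ) ≤ |g ω| ^ n * Real.exp (c * g ω) by positivity),
      abs_of_nonneg hB]
    exact key (g ω)

private lemma integrable_pow_mul_exp {Ω : Type*} [MeasurableSpace Ω] (P : Measure Ω)
    (g : Ω → ℝ) (hg : Measurable g) (n : ℕ) {a b c : ℝ}
    (ha : Integrable (fun ω => Real.exp (a * g ω)) P)
    (hb : Integrable (fun ω => Real.exp (b * g ω)) P)
    (hac : a < c) (hcb : c < b) :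
    Integrable (fun ω => g ω ^ n * Real.exp (c * g ω)) P := by
  refine (integrable_abs_pow_mul_exp P g hg n ha hb hac hcb).mono
    (((hg.pow_const n).mul ((hg.const_mul c).exp)).aestronglyMeasurable)
    (Eventually.of_forall fun ω => ?_)
  have e1 : |g ω ^ n * Real.exp (c * g ω)| = |g ω| ^ n * Real.exp (c * g ω) := by
    rw [abs_mul, abs_pow, abs_of_nonneg (Real.exp_nonneg _)]
  have e2 : |(|g ω| ^ n * Real.exp (c * g ω))| = |g ω| ^ n * Real.exp (c * g ω) := by
    rw [abs_mul, abs_pow, abs_abs, abs_of_nonneg (Real.exp_nonneg _)]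
  rw [Real.norm_eq_abs, Real.norm_eq_abs, e1, e2]

noncomputable def expMoment {Ω : Type*} [MeasurableSpace Ω] (P : Measure Ω) (g : Ω → ℝ)
    (n : ℕ) (c : ℝ) : ℝ :=
  ∫ ω, g ω ^ n * Real.exp (c * g ω) ∂P

private lemma hasDerivAt_expMoment {Ω : Type*} [MeasurableSpace Ω] (P : Measure Ω)
    (g : Ω → ℝ) (hg : Measurable g) (n : ℕ) {c ε : ℝ} (hε : 0 < ε)
    (hS : ∀ t ∈ Metric.ball c ε, Integrable (fun ω => Real.exp (t * g ω)) P) :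
    HasDerivAt (expMoment P g n) (expMoment P g (n + 1) c) c := by
  have hmem : ∀ t : ℝ, |t - c| < ε → t ∈ Metric.ball c ε := by
    intro t ht; rw [Metric.mem_ball, Real.dist_eq]; exact ht
  have ha : Integrable (fun ω => Real.exp ((c - 3 * ε / 4) * g ω)) P := by
    refine hS _ (hmem _ ?_); rw [show c - 3 * ε / 4 - c = -(3 * ε / 4) by ring, abs_neg,
      abs_of_nonneg (by linarith)]; linarith
  have hb : Integrable (fun ω => Real.exp ((c + 3 * ε / 4) * g ω)) P := by
    refine hS _ (hmem _ ?_); rw [show c + 3 * ε / 4 - c = 3 * ε / 4 by ring,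
      abs_of_nonneg (by linarith)]; linarith
  have hintm : ∀ m : ℕ, ∀ t : ℝ, c - 3 * ε / 4 < t → t < c + 3 * ε / 4 →
      Integrable (fun ω => |g ω| ^ m * Real.exp (t * g ω)) P := fun m t h1 h2 =>
    integrable_abs_pow_mul_exp P g hg m ha hb h1 h2
  have hres := hasDerivAt_integral_of_dominated_loc_of_deriv_le (μ := P)
    (F := fun t ω => g ω ^ n * Real.exp (t * g ω))
    (F' := fun t ω => g ω ^ (n + 1) * Real.exp (t * g ω))
    (x₀ := c)
    (bound := fun ω => |g ω| ^ (n + 1) *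
      (Real.exp ((c - ε / 4) * g ω) + Real.exp ((c + ε / 4) * g ω)))
    (Metric.ball_mem_nhds c (show (0:ℝ) < ε / 4 by linarith))
    (Eventually.of_forall fun t =>
      ((hg.pow_const n).mul ((hg.const_mul t).exp)).aestronglyMeasurable)
    (integrable_pow_mul_exp P g hg n ha hb (by linarith) (by linarith))
    (((hg.pow_const (n + 1)).mul ((hg.const_mul c).exp)).aestronglyMeasurable)
    (Eventually.of_forall fun ω => ?_)
    ?_
    (Eventually.of_forall fun ω => ?_)
  · exact hres.2
  · -- bound
    intro t ht
    rw [Metric.mem_ball, Real.dist_eq] at ht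
    have h1 : c - ε / 4 ≤ t := by cases abs_lt.1 ht; linarith
    have h2 : t ≤ c + ε / 4 := by cases abs_lt.1 ht; linarith
    rw [Real.norm_eq_abs, abs_mul, abs_pow, abs_of_nonneg (Real.exp_nonneg _)]
    exact mul_le_mul_of_nonneg_left (exp_mul_le_add (g ω) h1 h2) (by positivity)
  · -- bound integrable
    have i1 := hintm (n + 1) (c - ε / 4) (by linarith) (by linarith)
    have i2 := hintm (n + 1) (c + ε / 4) (by linarith) (by linarith)
    have := i1.add i2
    refine this.congr (Eventually.of_forall fun ω => ?_)
    simp only [Pi.add_apply]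
    ring
  · -- pointwise derivative
    intro t ht
    have h0 : HasDerivAt (fun s : ℝ => Real.exp (s * g ω))
        (Real.exp (t * g ω) * g ω) t := (hasDerivAt_mul_const (g ω)).exp
    have h1 := h0.const_mul (g ω ^ n)
    have : g ω ^ n * (Real.exp (t * g ω) * g ω) = g ω ^ (n + 1) * Real.exp (t * g ω) := by
      ring
    rwa [this] at h1

private lemma expMoment_zero_pos {Ω : Type*} [MeasurableSpace Ω] {P : Measure Ω}
    [IsProbabilityMeasure P] {g : Ω → ℝ} {c : ℝ}
    (hInt : Integrable (fun ω => Real.exp (c * g ω)) P) :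
    0 < expMoment P g 0 c := by
  have h := ProbabilityTheory.mgf_pos (X := g) (μ := P) (t := c) hInt
  have heq : expMoment P g 0 c = ProbabilityTheory.mgf g P c := by
    simp [expMoment, ProbabilityTheory.mgf]
  rw [heq]; exact h

private lemma expMoment_discr_pos {Ω : Type*} [MeasurableSpace Ω] {P : Measure Ω}
    [IsProbabilityMeasure P] {g : Ω → ℝ} (hg : Measurable g) (hgint : Integrable g P)
    (hmean : ∫ ω, g ω ∂P = 0) (hne : ¬ ∀ᵐ ω ∂P, g ω = 0) {a b c : ℝ}
    (ha : Integrable (fun ω => Real.exp (a * g ω)) P)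
    (hb : Integrable (fun ω => Real.exp (b * g ω)) P)
    (hac : a < c) (hcb : c < b) :
    0 < expMoment P g 2 c * expMoment P g 0 c - expMoment P g 1 c ^ 2 := by
  have i0 : Integrable (fun ω => g ω ^ 0 * Real.exp (c * g ω)) P :=
    integrable_pow_mul_exp P g hg 0 ha hb hac hcb
  have i1 : Integrable (fun ω => g ω ^ 1 * Real.exp (c * g ω)) P :=
    integrable_pow_mul_exp P g hg 1 ha hb hac hcb
  have i2 : Integrable (fun ω => g ω ^ 2 * Real.exp (c * g ω)) P :=
    integrable_pow_mul_exp P g hg 2 ha hb hac hcb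
  have hiexp : Integrable (fun ω => Real.exp (c * g ω)) P := by
    refine i0.congr (Eventually.of_forall fun ω => ?_); simp
  have hE0 : 0 < expMoment P g 0 c := expMoment_zero_pos hiexp
  set m : ℝ := expMoment P g 1 c / expMoment P g 0 c with hm
  have hptw : ∀ ω, (g ω - m) ^ 2 * Real.exp (c * g ω) =
      g ω ^ 2 * Real.exp (c * g ω) - (2 * m) * (g ω ^ 1 * Real.exp (c * g ω))
        + m ^ 2 * (g ω ^ 0 * Real.exp (c * g ω)) := by
    intro ω; ring
  have hVint : Integrable (fun ω => (g ω - m) ^ 2 * Real.exp (c * g ω)) P := by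
    refine (((i2.sub (i1.const_mul (2 * m))).add (i0.const_mul (m ^ 2))).congr
      (Eventually.of_forall fun ω => ?_))
    simp only [Pi.add_apply, Pi.sub_apply]
    ring
  have hVval : ∫ ω, (g ω - m) ^ 2 * Real.exp (c * g ω) ∂P =
      expMoment P g 2 c - 2 * m * expMoment P g 1 c + m ^ 2 * expMoment P g 0 c := by
    have j1 : Integrable (fun ω => g ω ^ 2 * Real.exp (c * g ω)
        - 2 * m * (g ω ^ 1 * Real.exp (c * g ω))) P := i2.sub (i1.const_mul (2 * m))
    rw [integral_congr_ae (Eventually.of_forall hptw), integral_add j1 (i0.const_mul (m ^ 2)),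
      integral_sub i2 (i1.const_mul (2 * m)), integral_const_mul, integral_const_mul]
    rfl
  set V : ℝ := ∫ ω, (g ω - m) ^ 2 * Real.exp (c * g ω) ∂P with hV
  have hrel : expMoment P g 2 c * expMoment P g 0 c - expMoment P g 1 c ^ 2 =
      V * expMoment P g 0 c := by
    rw [hVval, hm]
    field_simp
    ring
  have hV0 : 0 ≤ V := integral_nonneg fun ω => by positivity
  rcases eq_or_lt_of_le hV0 with hVeq | hVpos
  · exfalso
    have hzero : ∀ᵐ ω ∂P, (g ω - m) ^ 2 * Real.exp (c * g ω) = 0 := by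
      have := (integral_eq_zero_iff_of_nonneg_ae
        (Eventually.of_forall fun ω => by positivity) hVint).1 hVeq.symm
      filter_upwards [this.le] with ω hω
      have h2 : 0 ≤ (g ω - m) ^ 2 * Real.exp (c * g ω) := by positivity
      have : (fun ω => (g ω - m) ^ 2 * Real.exp (c * g ω)) ω ≤ (0 : Ω → ℝ) ω := hω
      simp only [Pi.zero_apply] at this
      linarith
    have hgm : ∀ᵐ ω ∂P, g ω = m := by
      filter_upwards [hzero] with ω hω
      have hexp : Real.exp (c * g ω) ≠ 0 := (Real.exp_pos _).ne'
      have := mul_eq_zero.1 hω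
      rcases this with h | h
      · have := pow_eq_zero_iff (n := 2) (by norm_num) |>.1 h
        linarith
      · exact absurd h hexp
    have hmval : m = 0 := by
      have := integral_congr_ae hgm
      rw [hmean, integral_const, probReal_univ] at this
      simpa using this.symm
    rw [hmval] at hgm
    exact hne hgm
  · rw [hrel]
    exact mul_pos hVpos hE0

/-- **Unique minimizer** (Lemma A.2, part 1): if `(d₋, d₊)` is the largest open interval
on which the cumulant generating function `Λ(c) = log E_P[exp(c f̄)]` of the centered QoI
is finite, and `η₊ = lim_{c ↗ d₊} (c Λ′(c) − Λ(c))`, then for every `0 < η < η₊` the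
problem `inf_{c ∈ (0,d₊)} (Λ(c) + η)/c` has a unique minimizer `c₊ ∈ (0, d₊)`, which is
the unique solution in `(0, d₊)` of `c Λ′(c) − Λ(c) = η`. -/
theorem unique_minimizer_of_uq_objective {Ω : Type*} [MeasurableSpace Ω]
    (P : Measure Ω) [IsProbabilityMeasure P]
    (f : Ω → ℝ) (hf : Measurable f) (hfP : Integrable f P)
    (hnconst : ¬ ∀ᵐ ω ∂P, f ω = ∫ x, f x ∂P)
    (fbar : Ω → ℝ) (hfbar : fbar = fun ω => f ω - ∫ x, f x ∂P)
    (Λ : ℝ → ℝ) (hΛ : Λ = fun c => Real.log (∫ ω, Real.exp (c * fbar ω) ∂P))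
    (dminus dplus : EReal) (hdm : dminus < 0) (hdp : 0 < dplus)
    (hmax : interior {c : ℝ | Integrable (fun ω => Real.exp (c * fbar ω)) P}
      = {c : ℝ | dminus < (c : EReal) ∧ (c : EReal) < dplus})
    (ηplus : EReal) (hηpos : 0 < ηplus)
    (hηlim : Tendsto (fun c : ℝ => ((c * deriv Λ c - Λ c : ℝ) : EReal))
      (comap (fun c : ℝ => (c : EReal)) (nhdsWithin dplus (Set.Iio dplus))) (nhds ηplus))
    (η : ℝ) (hη0 : 0 < η) (hηlt : (η : EReal) < ηplus) :
    ∃! cplus : ℝ, (0 < cplus ∧ (cplus : EReal) < dplus) ∧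
      (∀ c : ℝ, 0 < c → (c : EReal) < dplus → c ≠ cplus →
        (Λ cplus + η) / cplus < (Λ c + η) / c) ∧
      (cplus * deriv Λ cplus - Λ cplus = η ∧
        ∀ c : ℝ, 0 < c → (c : EReal) < dplus → c * deriv Λ c - Λ c = η → c = cplus) := by
  -- basic facts on fbar
  have hgmeas : Measurable fbar := by rw [hfbar]; exact hf.sub measurable_const
  have hgint : Integrable fbar P := by rw [hfbar]; exact hfP.sub (integrable_const _)
  have hgmean : ∫ ω, fbar ω ∂P = 0 := by
    rw [hfbar, integral_sub hfP (integrable_const _), integral_const, probReal_univ]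
    simp
  have hgne : ¬ ∀ᵐ ω ∂P, fbar ω = 0 := by
    rw [hfbar]; intro h; exact hnconst (h.mono fun ω hω => by simpa [sub_eq_zero] using hω)
  set S : Set ℝ := {c : ℝ | Integrable (fun ω => Real.exp (c * fbar ω)) P} with hSdef
  have hmem : ∀ c : ℝ, 0 ≤ c → (c : EReal) < dplus → c ∈ interior S := by
    intro c h0 hlt
    rw [hmax]
    exact ⟨lt_of_lt_of_le hdm (EReal.coe_nonneg.2 h0), hlt⟩
  have hball : ∀ c ∈ interior S, ∃ ε > 0, Metric.ball c ε ⊆ S := fun c hc =>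
    Metric.mem_nhds_iff.mp (mem_interior_iff_mem_nhds.mp hc)
  have hΛeq : ∀ c : ℝ, Λ c = Real.log (expMoment P fbar 0 c) := by
    intro c; rw [hΛ]; simp [expMoment]
  have hMpos : ∀ c ∈ S, 0 < expMoment P fbar 0 c := fun c hc => expMoment_zero_pos hc
  -- the key differentiability facts
  have hkey : ∀ c ∈ interior S,
      HasDerivAt Λ (expMoment P fbar 1 c / expMoment P fbar 0 c) c ∧
      HasDerivAt (fun x => expMoment P fbar 1 x / expMoment P fbar 0 x)
        ((expMoment P fbar 2 c * expMoment P fbar 0 c - expMoment P fbar 1 c ^ 2)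
          / expMoment P fbar 0 c ^ 2) c ∧
      0 < expMoment P fbar 2 c * expMoment P fbar 0 c - expMoment P fbar 1 c ^ 2 := by
    intro c hc
    obtain ⟨ε, hε, hballc⟩ := hball c hc
    have hSball : ∀ t ∈ Metric.ball c ε, Integrable (fun ω => Real.exp (t * fbar ω)) P :=
      fun t ht => hballc ht
    have hd0 : HasDerivAt (expMoment P fbar 0) (expMoment P fbar 1 c) c :=
      hasDerivAt_expMoment P fbar hgmeas 0 hε hSball
    have hd1 : HasDerivAt (expMoment P fbar 1) (expMoment P fbar 2 c) c :=
      hasDerivAt_expMoment P fbar hgmeas 1 hε hSball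
    have hpos : 0 < expMoment P fbar 0 c :=
      hMpos c (interior_subset hc)
    have hΛd : HasDerivAt Λ (expMoment P fbar 1 c / expMoment P fbar 0 c) c := by
      have hfun : Λ = fun y => Real.log (expMoment P fbar 0 y) := funext hΛeq
      rw [hfun]
      exact hd0.log hpos.ne'
    have hamem : c - 3 * ε / 4 ∈ Metric.ball c ε := by
      rw [Metric.mem_ball, Real.dist_eq, show c - 3 * ε / 4 - c = -(3 * ε / 4) by ring,
        abs_neg, abs_of_nonneg (by linarith)]
      linarith
    have hbmem : c + 3 * ε / 4 ∈ Metric.ball c ε := by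
      rw [Metric.mem_ball, Real.dist_eq, show c + 3 * ε / 4 - c = 3 * ε / 4 by ring,
        abs_of_nonneg (by linarith)]
      linarith
    have hdiscr : 0 < expMoment P fbar 2 c * expMoment P fbar 0 c
        - expMoment P fbar 1 c ^ 2 :=
      expMoment_discr_pos hgmeas hgint hgmean hgne (hSball _ hamem) (hSball _ hbmem)
        (by linarith) (by linarith)
    refine ⟨hΛd, ?_, hdiscr⟩
    have := hd1.div hd0 hpos.ne'
    rw [show expMoment P fbar 1 c ^ 2 = expMoment P fbar 1 c * expMoment P fbar 1 c by ring]
    exact this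
  have hderivΛ : ∀ c ∈ interior S,
      deriv Λ c = expMoment P fbar 1 c / expMoment P fbar 0 c :=
    fun c hc => ((hkey c hc).1).deriv
  -- the function G c = c Λ'(c) - Λ(c)
  set G : ℝ → ℝ := fun c => c * (expMoment P fbar 1 c / expMoment P fbar 0 c) - Λ c
    with hGdef
  have hGeq : ∀ c ∈ interior S, c * deriv Λ c - Λ c = G c := by
    intro c hc; rw [hderivΛ c hc]
  have hGd : ∀ c ∈ interior S, HasDerivAt G
      (c * ((expMoment P fbar 2 c * expMoment P fbar 0 c - expMoment P fbar 1 c ^ 2)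
        / expMoment P fbar 0 c ^ 2)) c := by
    intro c hc
    obtain ⟨h1, h2, _⟩ := hkey c hc
    have := ((hasDerivAt_id c).mul h2).sub h1
    refine this.congr_deriv ?_
    simp only [id_eq]
    ring
  have hΛ0 : Λ 0 = 0 := by
    rw [hΛeq]
    have : expMoment P fbar 0 0 = 1 := by
      simp [expMoment, measure_univ]
    rw [this, Real.log_one]
  have hG0 : G 0 = 0 := by
    rw [hGdef]; simp [hΛ0]
  -- G is strictly increasing on [0, dplus)
  have hGmono : ∀ a b : ℝ, 0 ≤ a → a < b → (b : EReal) < dplus → G a < G b := by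
    intro a b ha hab hb
    have hsub : Icc a b ⊆ interior S := fun x hx =>
      hmem x (ha.trans hx.1) (lt_of_le_of_lt (EReal.coe_le_coe_iff.2 hx.2) hb)
    refine strictMonoOn_of_deriv_pos (convex_Icc a b)
      (fun x hx => ((hGd x (hsub hx)).differentiableAt.continuousAt).continuousWithinAt)
      ?_ (left_mem_Icc.2 hab.le) (right_mem_Icc.2 hab.le) hab
    intro x hx
    rw [interior_Icc] at hx
    have hxi := hsub (Ioo_subset_Icc_self hx)
    rw [(hGd x hxi).deriv]
    have h3 := (hkey x hxi).2.2
    have hE0 := hMpos x (interior_subset hxi)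
    have hx0 : 0 < x := lt_of_le_of_lt ha hx.1
    exact mul_pos hx0 (div_pos h3 (by positivity))
  -- find c₀ < dplus with G c₀ > η
  obtain ⟨c₀, hc₀pos, hc₀lt, hc₀G⟩ :
      ∃ c₀ : ℝ, 0 < c₀ ∧ (c₀ : EReal) < dplus ∧ η < c₀ * deriv Λ c₀ - Λ c₀ := by
    have hev : ∀ᶠ x in comap (fun c : ℝ => (c : EReal)) (nhdsWithin dplus (Set.Iio dplus)),
        (η : EReal) < ((x * deriv Λ x - Λ x : ℝ) : EReal) :=
      hηlim.eventually_const_lt hηlt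
    obtain ⟨t, ht, hsubt⟩ := Filter.mem_comap.mp hev
    obtain ⟨l, hl, hIoo⟩ := (mem_nhdsLT_iff_exists_Ioo_subset' hdp).1 ht
    have hmaxlt : max l 0 < dplus := max_lt hl hdp
    obtain ⟨q, hq1, hq2⟩ := EReal.exists_rat_btwn_of_lt hmaxlt
    refine ⟨(q : ℝ), ?_, hq2, ?_⟩
    · have h0 : (0 : EReal) < ((q : ℝ) : EReal) := lt_of_le_of_lt (le_max_right l 0) hq1
      exact_mod_cast h0
    · have hmem' : ((q : ℝ) : EReal) ∈ Ioo l dplus :=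
        ⟨lt_of_le_of_lt (le_max_left l 0) hq1, hq2⟩
      have := hsubt (hIoo hmem')
      exact_mod_cast this
  have hc₀intS : c₀ ∈ interior S := hmem c₀ hc₀pos.le hc₀lt
  -- intermediate value theorem
  have hcont : ContinuousOn G (Icc 0 c₀) := by
    intro x hx
    have hxi : x ∈ interior S :=
      hmem x hx.1 (lt_of_le_of_lt (EReal.coe_le_coe_iff.2 hx.2) hc₀lt)
    exact ((hGd x hxi).differentiableAt.continuousAt).continuousWithinAt
  have hηmem : η ∈ Ioo (G 0) (G c₀) := by
    constructor
    · rw [hG0]; exact hη0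
    · rw [← hGeq c₀ hc₀intS]; exact hc₀G
  obtain ⟨cp, hcpmem, hcpG⟩ := intermediate_value_Ioo hc₀pos.le hcont hηmem
  have hcplt : (cp : EReal) < dplus := lt_trans (EReal.coe_lt_coe_iff.2 hcpmem.2) hc₀lt
  have hcpintS : cp ∈ interior S := hmem cp hcpmem.1.le hcplt
  -- uniqueness of the root
  have huniq : ∀ c : ℝ, 0 < c → (c : EReal) < dplus → c * deriv Λ c - Λ c = η → c = cp := by
    intro c hc hcd hceq
    rw [hGeq c (hmem c hc.le hcd)] at hceq
    by_contra hne
    rcases lt_or_gt_of_ne hne with h | h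
    · have := hGmono c cp hc.le h hcplt
      rw [hceq, hcpG] at this
      exact lt_irrefl _ this
    · have := hGmono cp c hcpmem.1.le h hcd
      rw [hceq, hcpG] at this
      exact lt_irrefl _ this
  -- derivative of the objective
  have hHd : ∀ x : ℝ, 0 < x → x ∈ interior S →
      HasDerivAt (fun y => (Λ y + η) / y) ((G x - η) / x ^ 2) x := by
    intro x hx hxi
    have h1 := (hkey x hxi).1
    have := (h1.add_const η).div (hasDerivAt_id x) hx.ne'
    refine this.congr_deriv ?_
    rw [hGdef]
    simp only [id_eq, mul_one]
    ring
  -- the minimization property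
  have hmin : ∀ c : ℝ, 0 < c → (c : EReal) < dplus → c ≠ cp →
      (Λ cp + η) / cp < (Λ c + η) / c := by
    intro c hc hcd hne
    rcases lt_or_gt_of_ne hne with h | h
    · -- c < cp : strict anti on [c, cp]
      have hsub : Icc c cp ⊆ interior S := fun x hx =>
        hmem x (hc.le.trans hx.1) (lt_of_le_of_lt (EReal.coe_le_coe_iff.2 hx.2) hcplt)
      refine strictAntiOn_of_deriv_neg (convex_Icc c cp)
        (fun x hx => ((hHd x (hc.trans_le hx.1) (hsub hx)).differentiableAt.continuousAt
          ).continuousWithinAt) ?_ (left_mem_Icc.2 h.le) (right_mem_Icc.2 h.le) h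
      intro x hx
      rw [interior_Icc] at hx
      have hx0 : 0 < x := hc.trans hx.1
      rw [(hHd x hx0 (hsub (Ioo_subset_Icc_self hx))).deriv]
      apply div_neg_of_neg_of_pos _ (by positivity)
      have hGlt : G x < G cp := hGmono x cp hx0.le hx.2 hcplt
      rw [hcpG] at hGlt
      linarith
    · -- cp < c : strict mono on [cp, c]
      have hsub : Icc cp c ⊆ interior S := fun x hx =>
        hmem x (hcpmem.1.le.trans hx.1) (lt_of_le_of_lt (EReal.coe_le_coe_iff.2 hx.2) hcd)
      refine strictMonoOn_of_deriv_pos (convex_Icc cp c)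
        (fun x hx => ((hHd x (hcpmem.1.trans_le hx.1) (hsub hx)).differentiableAt.continuousAt
          ).continuousWithinAt) ?_ (left_mem_Icc.2 h.le) (right_mem_Icc.2 h.le) h
      intro x hx
      rw [interior_Icc] at hx
      have hx0 : 0 < x := hcpmem.1.trans hx.1
      rw [(hHd x hx0 (hsub (Ioo_subset_Icc_self hx))).deriv]
      apply div_pos _ (by positivity)
      have hGlt : G cp < G x := hGmono cp x hcpmem.1.le hx.1
        (lt_trans (EReal.coe_lt_coe_iff.2 hx.2) hcd)
      rw [hcpG] at hGlt
      linarith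
  refine ⟨cp, ⟨⟨hcpmem.1, hcplt⟩, hmin, ?_, huniq⟩, ?_⟩
  · rw [hGeq cp hcpintS]; exact hcpG
  · intro y hy
    exact huniq y hy.1.1 hy.1.2 hy.2.2.1
end

section
/- Let P be a probability measure on Ω and f : Ω → ℝ a P-integrable measurable function with centered version f̄ := f − E_P[f] and Λ(c) := log E_P[exp(c·f̄)]. Suppose the maximal finiteness endpoint d₊ := sup{ c > 0 : Λ(c) < ∞ } is finite, and that the one-sided limits Λ(d₊) := lim_{c ↗ d₊} Λ(c) and Λ′(d₊) := lim_{c ↗ d₊} Λ′(c) are both finite; set η₊ := d₊·Λ′(d₊) − Λ(d₊), and let P_{d₊} be the exponential tilt at parameter d₊. Then for every η ≥ η₊: inf_{c>0} (Λ(c) + η)/c = (Λ(d₊) + η)/d₊ = ( E_{P_{d₊}}[f] − E_P[f] ) + (η − η₊)/d₊. -/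
open MeasureTheory Real Filter Set
open scoped Classical

section AuxLemmas

set_option linter.unusedSectionVars false

variable {Ω : Type*} [MeasurableSpace Ω] {P : Measure Ω} [IsProbabilityMeasure P] {g : Ω → ℝ}

/-- Downward closure of exponential integrability. -/
lemma aux_int_mono (hg : Measurable g) {c c' : ℝ} (hc : 0 ≤ c) (hcc : c ≤ c')
    (h : Integrable (fun ω => exp (c' * g ω)) P) :
    Integrable (fun ω => exp (c * g ω)) P := by
  refine Integrable.mono' (h.add (integrable_const 1)) ?_ ?_
  · exact ((hg.const_mul c).exp).aestronglyMeasurable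
  · refine ae_of_all _ fun ω => ?_
    rw [Real.norm_eq_abs, abs_of_pos (exp_pos _)]
    rcases le_or_gt 0 (g ω) with h0 | h0
    · have : c * g ω ≤ c' * g ω := mul_le_mul_of_nonneg_right hcc h0
      calc exp (c * g ω) ≤ exp (c' * g ω) := exp_le_exp.2 this
        _ ≤ exp (c' * g ω) + 1 := by linarith
    · have : c * g ω ≤ 0 := mul_nonpos_of_nonneg_of_nonpos hc h0.le
      calc exp (c * g ω) ≤ 1 := exp_le_one_iff.2 this
        _ ≤ exp (c' * g ω) + 1 := by linarith [exp_pos (c' * g ω)]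

/-- `|g| e^{a g}` is integrable if the exponential moments at `a ± δ` are finite. -/
lemma aux_int_abs (hg : Measurable g) {a δ : ℝ} (hδ : 0 < δ)
    (h1 : Integrable (fun ω => exp ((a + δ) * g ω)) P)
    (h2 : Integrable (fun ω => exp ((a - δ) * g ω)) P) :
    Integrable (fun ω => |g ω| * exp (a * g ω)) P := by
  refine Integrable.mono' (((h1.add h2).const_mul δ⁻¹)) ?_ ?_
  · exact (hg.abs.mul ((hg.const_mul a).exp)).aestronglyMeasurable
  · refine ae_of_all _ fun ω => ?_
    have hx : |g ω| ≤ δ⁻¹ * (exp (δ * g ω) + exp (-δ * g ω)) := by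
      rcases le_or_gt 0 (g ω) with h0 | h0
      · have h3 : δ * g ω ≤ exp (δ * g ω) := (Real.add_one_le_exp _).trans' (by linarith)
        rw [abs_of_nonneg h0]
        have : g ω ≤ δ⁻¹ * exp (δ * g ω) := by
          rw [← mul_le_mul_iff_right₀ hδ, ← mul_assoc, mul_inv_cancel₀ hδ.ne', one_mul]; exact h3
        nlinarith [mul_pos (inv_pos.2 hδ) (exp_pos (-δ * g ω))]
      · have h3 : -δ * g ω ≤ exp (-δ * g ω) := (Real.add_one_le_exp _).trans' (by linarith)
        rw [abs_of_neg h0]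
        have : -g ω ≤ δ⁻¹ * exp (-δ * g ω) := by
          rw [← mul_le_mul_iff_right₀ hδ, ← mul_assoc, mul_inv_cancel₀ hδ.ne', one_mul]; linarith
        nlinarith [mul_pos (inv_pos.2 hδ) (exp_pos (δ * g ω))]
    have hpos : (0:ℝ) < exp (a * g ω) := exp_pos _
    rw [Real.norm_eq_abs, abs_of_nonneg (by positivity)]
    calc |g ω| * exp (a * g ω) ≤ (δ⁻¹ * (exp (δ * g ω) + exp (-δ * g ω))) * exp (a * g ω) :=
          mul_le_mul_of_nonneg_right hx hpos.le
      _ = δ⁻¹ * (exp (δ * g ω) * exp (a * g ω) + exp (-δ * g ω) * exp (a * g ω)) := by ring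
      _ = δ⁻¹ * (exp ((a + δ) * g ω) + exp ((a - δ) * g ω)) := by
          rw [← exp_add, ← exp_add]; ring_nf

/-- Fatou: a nonneg pointwise limit of nonneg integrable functions with bounded integrals
is integrable. -/
lemma aux_int_fatou {h : Ω → ℝ} (hm : Measurable h) (h0 : ∀ ω, 0 ≤ h ω)
    {u : ℕ → Ω → ℝ} (hum : ∀ n, Measurable (u n)) (hui : ∀ n, Integrable (u n) P)
    (hu0 : ∀ n ω, 0 ≤ u n ω)
    (hlim : ∀ ω, Tendsto (fun n => u n ω) atTop (nhds (h ω)))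
    {B : ℝ} (hB : ∀ᶠ n in atTop, ∫ ω, u n ω ∂P ≤ B) : Integrable h P := by
  have key : ∫⁻ ω, ENNReal.ofReal (h ω) ∂P ≤ ENNReal.ofReal B := by
    have h1 : ∀ ω, ENNReal.ofReal (h ω)
        = Filter.liminf (fun n => ENNReal.ofReal (u n ω)) atTop := by
      intro ω
      exact (((ENNReal.continuous_ofReal.tendsto _).comp (hlim ω)).liminf_eq).symm
    calc ∫⁻ ω, ENNReal.ofReal (h ω) ∂P
        = ∫⁻ ω, Filter.liminf (fun n => ENNReal.ofReal (u n ω)) atTop ∂P := by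
          simp_rw [h1]
      _ ≤ Filter.liminf (fun n => ∫⁻ ω, ENNReal.ofReal (u n ω) ∂P) atTop :=
          lintegral_liminf_le (fun n => (hum n).ennreal_ofReal)
      _ ≤ ENNReal.ofReal B := by
          refine Filter.liminf_le_of_le (by isBoundedDefault) ?_
          refine fun b hb => ?_
          obtain ⟨n, hn, hBn⟩ := (hb.and hB).exists
          calc b ≤ ∫⁻ ω, ENNReal.ofReal (u n ω) ∂P := hn
            _ = ENNReal.ofReal (∫ ω, u n ω ∂P) :=
              (MeasureTheory.ofReal_integral_eq_lintegral_ofReal (hui n)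
                (ae_of_all _ (hu0 n))).symm
            _ ≤ ENNReal.ofReal B := ENNReal.ofReal_le_ofReal hBn
  refine ⟨hm.aestronglyMeasurable, ?_⟩
  rw [hasFiniteIntegral_iff_norm]
  calc ∫⁻ ω, ENNReal.ofReal ‖h ω‖ ∂P = ∫⁻ ω, ENNReal.ofReal (h ω) ∂P := by
        simp_rw [Real.norm_eq_abs]
        congr 1; funext ω; rw [abs_of_nonneg (h0 ω)]
    _ ≤ ENNReal.ofReal B := key
    _ < ⊤ := ENNReal.ofReal_lt_top

set_option maxHeartbeats 1000000 in
/-- Differentiation under the integral sign for the moment generating function. -/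
lemma aux_hasDeriv (hg : Measurable g) {c ε : ℝ} (hε0 : 0 < ε)
    (hint : Integrable (fun ω => exp (c * g ω)) P)
    (i1 : Integrable (fun ω => |g ω| * exp ((c - ε) * g ω)) P)
    (i2 : Integrable (fun ω => |g ω| * exp ((c + ε) * g ω)) P) :
    Integrable (fun ω => g ω * exp (c * g ω)) P ∧
    HasDerivAt (fun x => ∫ ω, exp (x * g ω) ∂P) (∫ ω, g ω * exp (c * g ω) ∂P) c := by
  refine hasDerivAt_integral_of_dominated_loc_of_deriv_le (Metric.ball_mem_nhds c hε0)
    (Eventually.of_forall fun x => ((hg.const_mul x).exp).aestronglyMeasurable)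
    hint
    (F' := fun x ω => g ω * exp (x * g ω))
    ((hg.mul ((hg.const_mul c).exp)).aestronglyMeasurable)
    (bound := fun ω => |g ω| * exp ((c - ε) * g ω) + |g ω| * exp ((c + ε) * g ω)) ?_ ?_ ?_
  · refine ae_of_all _ fun ω x hx => ?_
    rw [Metric.mem_ball, Real.dist_eq, abs_lt] at hx
    rw [Real.norm_eq_abs, abs_mul, abs_of_pos (exp_pos _)]
    have h1 : (0:ℝ) ≤ |g ω| := abs_nonneg _
    rcases le_or_gt 0 (g ω) with h0 | h0
    · have : x * g ω ≤ (c + ε) * g ω := mul_le_mul_of_nonneg_right (by linarith) h0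
      have h2 := exp_le_exp.2 this
      calc |g ω| * exp (x * g ω) ≤ |g ω| * exp ((c + ε) * g ω) :=
            mul_le_mul_of_nonneg_left h2 h1
        _ ≤ _ := le_add_of_nonneg_left (by positivity)
    · have : x * g ω ≤ (c - ε) * g ω := by nlinarith
      have h2 := exp_le_exp.2 this
      calc |g ω| * exp (x * g ω) ≤ |g ω| * exp ((c - ε) * g ω) :=
            mul_le_mul_of_nonneg_left h2 h1
        _ ≤ _ := le_add_of_nonneg_right (by positivity)
  · exact i1.add i2
  · refine ae_of_all _ fun ω x hx => ?_
    have h := (hasDerivAt_mul_const (g ω) (x := x)).exp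
    simpa [mul_comm] using h

end AuxLemmas

set_option maxHeartbeats 2000000 in
/-- **Lemma A.2, part 3(a)**: if `d₊ = sup{c > 0 : Λ(c) < ∞}` is finite and the one-sided
limits `Λ(d₊)` and `Λ′(d₊)` are both finite, then with `η₊ = d₊ Λ′(d₊) − Λ(d₊)`, for every
`η ≥ η₊`:
`inf_{c>0} (Λ(c)+η)/c = (Λ(d₊)+η)/d₊ = (E_{P_{d₊}}[f] − E_P[f]) + (η − η₊)/d₊`. -/
theorem uq_objective_large_eta_finite_endpoint {Ω : Type*} [MeasurableSpace Ω]
    (P : Measure Ω) [IsProbabilityMeasure P]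
    (f : Ω → ℝ) (hf : Measurable f) (hfP : Integrable f P)
    (fbar : Ω → ℝ) (hfbar : fbar = fun ω => f ω - ∫ x, f x ∂P)
    (Λ : ℝ → ℝ) (hΛ : Λ = fun c => Real.log (∫ ω, Real.exp (c * fbar ω) ∂P))
    (dplus : ℝ)
    (hne : {c : ℝ | 0 < c ∧ Integrable (fun ω => Real.exp (c * fbar ω)) P}.Nonempty)
    (hbdd : BddAbove {c : ℝ | 0 < c ∧ Integrable (fun ω => Real.exp (c * fbar ω)) P})
    (hd : dplus = sSup {c : ℝ | 0 < c ∧ Integrable (fun ω => Real.exp (c * fbar ω)) P})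
    (Λd Λ'd : ℝ)
    (hΛd : Tendsto Λ (nhdsWithin dplus (Set.Iio dplus)) (nhds Λd))
    (hΛ'd : Tendsto (deriv Λ) (nhdsWithin dplus (Set.Iio dplus)) (nhds Λ'd))
    (ηplus : ℝ) (hηplus : ηplus = dplus * Λ'd - Λd)
    (η : ℝ) (hη : ηplus ≤ η) :
    (⨅ c ∈ Set.Ioi (0 : ℝ), uqObj P fbar η c = (((Λd + η) / dplus : ℝ) : EReal)) ∧
    ((Λd + η) / dplus
      = (∫ x, f x ∂(P.tilted (fun ω => dplus * fbar ω)) - ∫ x, f x ∂P)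
        + (η - ηplus) / dplus) := by
  have hg : Measurable fbar := by rw [hfbar]; exact hf.sub measurable_const
  have hgi : Integrable fbar P := by rw [hfbar]; exact hfP.sub (integrable_const _)

  set S := {c : ℝ | 0 < c ∧ Integrable (fun ω => Real.exp (c * fbar ω)) P} with hS
  -- positivity of dplus
  obtain ⟨c₀, hc₀⟩ := hne
  have hd0 : 0 < dplus := lt_of_lt_of_le hc₀.1 (hd ▸ le_csSup hbdd hc₀)
  -- integrability on (0, dplus)
  have hIoo : ∀ c : ℝ, 0 < c → c < dplus → Integrable (fun ω => Real.exp (c * fbar ω)) P := by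
    intro c hc hcd
    rw [hd] at hcd
    obtain ⟨c', hc', hcc'⟩ := exists_lt_of_lt_csSup ⟨c₀, hc₀⟩ hcd
    exact aux_int_mono hg hc.le hcc'.le hc'.2
  have hnotint : ∀ c : ℝ, dplus < c → ¬ Integrable (fun ω => Real.exp (c * fbar ω)) P := by
    intro c hcd hint
    exact absurd (hd ▸ le_csSup hbdd ⟨hd0.trans hcd, hint⟩) (not_le.2 hcd)
  -- the moment function
  set M : ℝ → ℝ := fun c => ∫ ω, Real.exp (c * fbar ω) ∂P with hM
  have hMpos : ∀ c : ℝ, Integrable (fun ω => Real.exp (c * fbar ω)) P → 0 < M c :=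
    fun c hint => integral_exp_pos hint
  -- sequence approaching dplus from the left
  set seq : ℕ → ℝ := fun n => dplus - dplus / (n + 2) with hseq
  have hseqmem : ∀ n, seq n ∈ Set.Ioo 0 dplus := by
    intro n
    have h2 : (0:ℝ) < (n:ℝ) + 2 := by positivity
    constructor
    · have : dplus / ((n:ℝ) + 2) < dplus / 1 := by
        apply div_lt_div_of_pos_left hd0 one_pos; linarith
      simp only [hseq]; rw [div_one] at this; linarith
    · have : 0 < dplus / ((n:ℝ) + 2) := div_pos hd0 h2
      simp only [hseq]; linarith
  have hseqtend : Tendsto seq atTop (nhdsWithin dplus (Set.Iio dplus)) := by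
    apply tendsto_nhdsWithin_of_tendsto_nhds_of_eventually_within
    · have h1 : Tendsto (fun n : ℕ => dplus / ((n:ℝ) + 2)) atTop (nhds 0) :=
        Tendsto.div_atTop tendsto_const_nhds
          (tendsto_atTop_add_const_right _ _ tendsto_natCast_atTop_atTop)
      have := (tendsto_const_nhds : Tendsto (fun _ : ℕ => dplus) atTop (nhds dplus)).sub h1
      simpa using this
    · exact Eventually.of_forall fun n => (hseqmem n).2
  -- eventually in the filter we are in (0, dplus)
  have hIooMem : Set.Ioo 0 dplus ∈ nhdsWithin dplus (Set.Iio dplus) :=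
    Ioo_mem_nhdsLT_of_mem (by constructor <;> [exact hd0; exact le_refl dplus])
  -- Λ on the sequence tends to Λd, so M (seq n) tends to exp Λd
  have hMseq : Tendsto (fun n => M (seq n)) atTop (nhds (Real.exp Λd)) := by
    have h1 : Tendsto (fun n => Λ (seq n)) atTop (nhds Λd) := hΛd.comp hseqtend
    have h2 : ∀ n, M (seq n) = Real.exp (Λ (seq n)) := by
      intro n
      rw [hΛ]
      exact (Real.exp_log (hMpos _ (hIoo _ (hseqmem n).1 (hseqmem n).2))).symm
    simp_rw [h2]
    exact (Real.continuous_exp.tendsto _).comp h1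
  -- integrability at the endpoint
  have hInt_d : Integrable (fun ω => Real.exp (dplus * fbar ω)) P := by
    refine aux_int_fatou ((hg.const_mul dplus).exp) (fun ω => (Real.exp_pos _).le)
      (fun n => (hg.const_mul (seq n)).exp)
      (fun n => hIoo _ (hseqmem n).1 (hseqmem n).2)
      (fun n ω => (Real.exp_pos _).le) ?_ (B := Real.exp Λd + 1) ?_
    · intro ω
      have : Tendsto (fun n => seq n * fbar ω) atTop (nhds (dplus * fbar ω)) :=
        (hseqtend.mono_right nhdsWithin_le_nhds).mul_const _
      exact (Real.continuous_exp.tendsto _).comp this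
    · filter_upwards [hMseq.eventually (eventually_le_nhds (lt_add_one _))] with n hn
      exact hn

  -- left continuity of M at dplus
  have hMd : Tendsto M (nhdsWithin dplus (Set.Iio dplus)) (nhds (M dplus)) := by
    refine tendsto_integral_filter_of_dominated_convergence
      (fun ω => 1 + Real.exp (dplus * fbar ω)) ?_ ?_ ((integrable_const 1).add hInt_d) ?_
    · exact Eventually.of_forall fun c => ((hg.const_mul c).exp).aestronglyMeasurable
    · filter_upwards [hIooMem] with c hc
      refine ae_of_all _ fun ω => ?_
      rw [Real.norm_eq_abs, abs_of_pos (Real.exp_pos _)]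
      rcases le_or_gt 0 (fbar ω) with h0 | h0
      · have : c * fbar ω ≤ dplus * fbar ω := mul_le_mul_of_nonneg_right hc.2.le h0
        have := Real.exp_le_exp.2 this
        linarith
      · have : c * fbar ω ≤ 0 := mul_nonpos_of_nonneg_of_nonpos hc.1.le h0.le
        have := Real.exp_le_one_iff.2 this
        linarith [Real.exp_pos (dplus * fbar ω)]
    · refine ae_of_all _ fun ω => ?_
      have hcont : Continuous fun c : ℝ => Real.exp (c * fbar ω) := by continuity
      exact (hcont.tendsto dplus).mono_left nhdsWithin_le_nhds
  have hMdpos : 0 < M dplus := hMpos _ hInt_d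
  -- Λd is the value of Λ at dplus
  have hΛdval : Λd = Λ dplus := by
    refine tendsto_nhds_unique hΛd ?_
    rw [hΛ]
    exact ((Real.continuousAt_log hMdpos.ne').tendsto).comp hMd
  -- derivative of M on (0, dplus)
  have hderiv : ∀ c : ℝ, 0 < c → c < dplus →
      Integrable (fun ω => fbar ω * Real.exp (c * fbar ω)) P ∧
      HasDerivAt M (∫ ω, fbar ω * Real.exp (c * fbar ω) ∂P) c := by
    intro c hc hcd
    set ε : ℝ := min c (dplus - c) / 2 with hε
    have hε0 : 0 < ε := by
      have := lt_min hc (by linarith : (0:ℝ) < dplus - c)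
      positivity
    have hε1 : ε ≤ c / 2 := by
      rw [hε]; linarith [min_le_left c (dplus - c)]
    have hε2 : ε ≤ (dplus - c) / 2 := by
      rw [hε]; linarith [min_le_right c (dplus - c)]
    have i1 : Integrable (fun ω => |fbar ω| * Real.exp ((c - ε) * fbar ω)) P := by
      refine aux_int_abs hg (half_pos hε0) ?_ ?_
      · exact hIoo _ (by linarith) (by linarith)
      · exact hIoo _ (by linarith) (by linarith)
    have i2 : Integrable (fun ω => |fbar ω| * Real.exp ((c + ε) * fbar ω)) P := by
      refine aux_int_abs hg (half_pos hε0) ?_ ?_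
      · exact hIoo _ (by linarith) (by linarith)
      · exact hIoo _ (by linarith) (by linarith)
    exact aux_hasDeriv hg hε0 (hIoo c hc hcd) i1 i2
  have hNint : ∀ c : ℝ, 0 < c → c < dplus →
      Integrable (fun ω => fbar ω * Real.exp (c * fbar ω)) P :=
    fun c hc hcd => (hderiv c hc hcd).1
  set N : ℝ → ℝ := fun c => ∫ ω, fbar ω * Real.exp (c * fbar ω) ∂P with hN
  -- derivative of Λ on (0,dplus)
  have hΛderiv : ∀ c : ℝ, 0 < c → c < dplus → deriv Λ c = N c / M c := by
    intro c hc hcd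
    have h1 : HasDerivAt Λ (N c / M c) c := by
      rw [hΛ]
      exact HasDerivAt.log (hderiv c hc hcd).2 (hMpos _ (hIoo c hc hcd)).ne'
    exact h1.deriv
  -- N tends to Λ'd * M dplus
  have hNtend1 : Tendsto N (nhdsWithin dplus (Set.Iio dplus)) (nhds (Λ'd * M dplus)) := by
    refine (hΛ'd.mul hMd).congr' ?_
    filter_upwards [hIooMem] with c hc
    rw [hΛderiv c hc.1 hc.2, div_mul_cancel₀]
    exact (hMpos _ (hIoo c hc.1 hc.2)).ne'
  -- integrability of |fbar| * exp(c fbar) on (0,dplus)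
  have habs : ∀ c : ℝ, 0 < c → c < dplus →
      Integrable (fun ω => |fbar ω| * Real.exp (c * fbar ω)) P := by
    intro c hc hcd
    set δ : ℝ := min c (dplus - c) / 2 with hδ
    have hδ0 : 0 < δ := by
      have := lt_min hc (by linarith : (0:ℝ) < dplus - c)
      positivity
    have hδ1 : δ ≤ c / 2 := by
      rw [hδ]; linarith [min_le_left c (dplus - c)]
    have hδ2 : δ ≤ (dplus - c) / 2 := by
      rw [hδ]; linarith [min_le_right c (dplus - c)]
    exact aux_int_abs hg hδ0 (hIoo _ (by linarith) (by linarith))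
      (hIoo _ (by linarith) (by linarith))
  -- bound: ∫ |fbar| e^{c fbar} ≤ N c + 2∫|fbar|
  have hIntBound : ∀ c : ℝ, 0 < c → c < dplus →
      ∫ ω, |fbar ω| * Real.exp (c * fbar ω) ∂P ≤ N c + 2 * ∫ ω, |fbar ω| ∂P := by
    intro c hc hcd
    have h1 : ∫ ω, |fbar ω| * Real.exp (c * fbar ω) ∂P
        ≤ ∫ ω, (fbar ω * Real.exp (c * fbar ω) + 2 * |fbar ω|) ∂P := by
      refine integral_mono (habs c hc hcd) ((hNint c hc hcd).add ((hgi.abs).const_mul 2)) ?_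
      intro ω
      show |fbar ω| * Real.exp (c * fbar ω) ≤ fbar ω * Real.exp (c * fbar ω) + 2 * |fbar ω|
      rcases le_or_gt 0 (fbar ω) with h0 | h0
      · rw [abs_of_nonneg h0]
        nlinarith [Real.exp_pos (c * fbar ω)]
      · rw [abs_of_neg h0]
        have he1 : Real.exp (c * fbar ω) ≤ 1 :=
          Real.exp_le_one_iff.2 (mul_nonpos_of_nonneg_of_nonpos hc.le h0.le)
        nlinarith [Real.exp_pos (c * fbar ω)]
    rw [integral_add (hNint c hc hcd) ((hgi.abs).const_mul 2), integral_const_mul] at h1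
    exact h1
  -- integrability at the endpoint of |fbar| e^{dplus fbar}
  have habsd : Integrable (fun ω => |fbar ω| * Real.exp (dplus * fbar ω)) P := by
    have hNseq : Tendsto (fun n => N (seq n)) atTop (nhds (Λ'd * M dplus)) :=
      hNtend1.comp hseqtend
    refine aux_int_fatou (hg.abs.mul ((hg.const_mul dplus).exp))
      (fun ω => by positivity)
      (fun n => hg.abs.mul ((hg.const_mul (seq n)).exp))
      (fun n => habs _ (hseqmem n).1 (hseqmem n).2)
      (fun n ω => by exact mul_nonneg (abs_nonneg _) (Real.exp_pos _).le) ?_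
      (B := Λ'd * M dplus + 1 + 2 * ∫ ω, |fbar ω| ∂P) ?_
    · intro ω
      have : Tendsto (fun n => seq n * fbar ω) atTop (nhds (dplus * fbar ω)) :=
        (hseqtend.mono_right nhdsWithin_le_nhds).mul_const _
      exact (tendsto_const_nhds.mul ((Real.continuous_exp.tendsto _).comp this))
    · filter_upwards [hNseq.eventually (eventually_le_nhds (lt_add_one _))] with n hn
      calc ∫ ω, |fbar ω| * Real.exp (seq n * fbar ω) ∂P
          ≤ N (seq n) + 2 * ∫ ω, |fbar ω| ∂P := hIntBound _ (hseqmem n).1 (hseqmem n).2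
        _ ≤ Λ'd * M dplus + 1 + 2 * ∫ ω, |fbar ω| ∂P := by linarith
  have hNd_int : Integrable (fun ω => fbar ω * Real.exp (dplus * fbar ω)) P := by
    refine habsd.mono' ((hg.mul ((hg.const_mul dplus).exp)).aestronglyMeasurable)
      (ae_of_all _ fun ω => ?_)
    rw [Real.norm_eq_abs, abs_mul, abs_of_pos (Real.exp_pos _)]
  -- N is left continuous at dplus
  have hNtend2 : Tendsto N (nhdsWithin dplus (Set.Iio dplus)) (nhds (N dplus)) := by
    refine tendsto_integral_filter_of_dominated_convergence
      (fun ω => |fbar ω| + |fbar ω| * Real.exp (dplus * fbar ω)) ?_ ?_ (hgi.abs.add habsd) ?_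
    · exact Eventually.of_forall fun c =>
        (hg.mul ((hg.const_mul c).exp)).aestronglyMeasurable
    · filter_upwards [hIooMem] with c hc
      refine ae_of_all _ fun ω => ?_
      rw [Real.norm_eq_abs, abs_mul, abs_of_pos (Real.exp_pos _)]
      have h1 : (0:ℝ) ≤ |fbar ω| := abs_nonneg _
      rcases le_or_gt 0 (fbar ω) with h0 | h0
      · have : c * fbar ω ≤ dplus * fbar ω := mul_le_mul_of_nonneg_right hc.2.le h0
        have h2 := Real.exp_le_exp.2 this
        nlinarith
      · have : c * fbar ω ≤ 0 := mul_nonpos_of_nonneg_of_nonpos hc.1.le h0.le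
        have h2 := Real.exp_le_one_iff.2 this
        nlinarith [Real.exp_pos (dplus * fbar ω)]
    · refine ae_of_all _ fun ω => ?_
      have hcont : Continuous fun c : ℝ => fbar ω * Real.exp (c * fbar ω) := by continuity
      exact (hcont.tendsto dplus).mono_left nhdsWithin_le_nhds
  -- identify Λ'd
  have hNM : N dplus = Λ'd * M dplus := tendsto_nhds_unique hNtend2 hNtend1
  have hΛ'val : Λ'd = N dplus / M dplus := by
    rw [hNM, mul_div_cancel_right₀ _ hMdpos.ne']
  -- supporting line at the endpoint (Jensen)
  have hΛM : ∀ x : ℝ, Λ x = Real.log (M x) := fun x => by rw [hΛ]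
  have hline : ∀ c : ℝ, 0 < c → c < dplus → Λ dplus + (c - dplus) * Λ'd ≤ Λ c := by
    intro c hc hcd
    set t : ℝ := c - dplus with ht
    set a : ℝ := t * Λ'd with ha
    have hpt : ∀ ω, Real.exp a * (t * (fbar ω * Real.exp (dplus * fbar ω))
        + (1 - a) * Real.exp (dplus * fbar ω)) ≤ Real.exp (c * fbar ω) := by
      intro ω
      have h1 : t * fbar ω - a + 1 ≤ Real.exp (t * fbar ω - a) :=
        Real.add_one_le_exp _
      have h2 : Real.exp a * (t * fbar ω - a + 1) ≤ Real.exp (t * fbar ω) := by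
        have h3 := mul_le_mul_of_nonneg_left h1 (Real.exp_pos a).le
        rwa [← Real.exp_add, add_sub_cancel] at h3
      have h3 := mul_le_mul_of_nonneg_right h2 (Real.exp_pos (dplus * fbar ω)).le
      rw [← Real.exp_add] at h3
      have harg : t * fbar ω + dplus * fbar ω = c * fbar ω := by rw [ht]; ring
      rw [harg] at h3
      calc Real.exp a * (t * (fbar ω * Real.exp (dplus * fbar ω))
            + (1 - a) * Real.exp (dplus * fbar ω))
          = Real.exp a * (t * fbar ω - a + 1) * Real.exp (dplus * fbar ω) := by ring
        _ ≤ Real.exp (c * fbar ω) := h3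
    have hLHSint : Integrable (fun ω => Real.exp a * (t * (fbar ω * Real.exp (dplus * fbar ω))
        + (1 - a) * Real.exp (dplus * fbar ω))) P :=
      ((hNd_int.const_mul t).add (hInt_d.const_mul (1 - a))).const_mul _
    have hmono := integral_mono hLHSint (hIoo c hc hcd) hpt
    have hval : ∫ ω, Real.exp a * (t * (fbar ω * Real.exp (dplus * fbar ω))
        + (1 - a) * Real.exp (dplus * fbar ω)) ∂P
        = Real.exp a * (t * N dplus + (1 - a) * M dplus) := by
      rw [integral_const_mul, integral_add (hNd_int.const_mul t) (hInt_d.const_mul (1 - a)),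
        integral_const_mul, integral_const_mul]
    have hsum : t * N dplus + (1 - a) * M dplus = M dplus := by
      have h4 : t * N dplus = a * M dplus := by
        rw [ha, hΛ'val]; field_simp
      linarith [h4]
    have hMc : Real.exp a * M dplus ≤ M c := by
      calc Real.exp a * M dplus = Real.exp a * (t * N dplus + (1 - a) * M dplus) := by
            rw [hsum]
        _ = _ := hval.symm
        _ ≤ M c := hmono
    have hlog : a + Real.log (M dplus) ≤ Real.log (M c) := by
      calc a + Real.log (M dplus) = Real.log (Real.exp a * M dplus) := by
            rw [Real.log_mul (Real.exp_ne_zero a) hMdpos.ne', Real.log_exp]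
        _ ≤ Real.log (M c) := Real.log_le_log (by positivity) hMc
    rw [ha] at hlog
    rw [hΛM c, hΛM dplus]
    linarith

  -- the tilted expectation
  set m : ℝ := ∫ x, f x ∂P with hm'
  have htilt : ∫ x, f x ∂(P.tilted (fun ω => dplus * fbar ω)) = Λ'd + m := by
    rw [integral_tilted]
    have hptw : ∀ ω, (Real.exp (dplus * fbar ω) / ∫ ω', Real.exp (dplus * fbar ω') ∂P) • f ω
        = (M dplus)⁻¹ * (fbar ω * Real.exp (dplus * fbar ω))
          + (m * (M dplus)⁻¹) * Real.exp (dplus * fbar ω) := by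
      intro ω
      have hfω : f ω = fbar ω + m := by rw [hfbar]; simp [hm']
      rw [smul_eq_mul, hfω]
      have : (∫ ω', Real.exp (dplus * fbar ω') ∂P) = M dplus := rfl
      rw [this]
      field_simp
    simp_rw [hptw]
    rw [integral_add (hNd_int.const_mul _) (hInt_d.const_mul _),
      integral_const_mul, integral_const_mul]
    have hNN : (∫ ω, fbar ω * Real.exp (dplus * fbar ω) ∂P) = N dplus := rfl
    have hMM : (∫ ω, Real.exp (dplus * fbar ω) ∂P) = M dplus := rfl
    rw [hNN, hMM, hΛ'val]
    field_simp
  constructor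
  · -- the infimum
    refine le_antisymm ?_ ?_
    · refine iInf₂_le_of_le dplus (Set.mem_Ioi.2 hd0) (le_of_eq ?_)
      have hint := hInt_d
      simp only [uqObj, if_pos hint]
      norm_cast
      rw [← hΛM dplus] at *
      rw [← hΛdval]
      field_simp
    · refine le_iInf₂ fun c hc => ?_
      rw [Set.mem_Ioi] at hc
      rcases lt_trichotomy c dplus with hcd | hcd | hcd
      · have hint := hIoo c hc hcd
        simp only [uqObj, if_pos hint]
        rw [EReal.coe_le_coe_iff]
        have hlog_eq : Real.log (∫ ω, Real.exp (c * fbar ω) ∂P) = Λ c := (hΛM c).symm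
        rw [hlog_eq]
        have hlc := hline c hc hcd
        rw [← hΛdval] at hlc
        have key : (Λd + η) * c ≤ (Λ c + η) * dplus := by
          nlinarith [mul_nonneg (by linarith : (0:ℝ) ≤ dplus - c)
            (by linarith : (0:ℝ) ≤ η - ηplus)]
        have h5 : (Λd + η) / dplus ≤ (Λ c + η) / c := by
          rw [div_le_div_iff₀ hd0 hc]; exact key
        calc (Λd + η) / dplus ≤ (Λ c + η) / c := h5
          _ = 1 / c * Λ c + η / c := by field_simp
      · subst hcd
        have hint := hInt_d
        simp only [uqObj, if_pos hint]
        rw [EReal.coe_le_coe_iff]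
        have hlog_eq : Real.log (∫ ω, Real.exp (c * fbar ω) ∂P) = Λ c := (hΛM c).symm
        rw [hlog_eq, ← hΛdval]
        have : 1 / c * Λd + η / c = (Λd + η) / c := by field_simp
        rw [this]
      · have hint := hnotint c hcd
        simp only [uqObj, if_neg hint]
        exact le_top
  · -- the equality with the tilted mean
    rw [htilt, hηplus]
    have : Λ'd + m - m = Λ'd := by ring
    rw [this]
    field_simp
    ring
end

section
/- Let P be a probability measure on Ω and f : Ω → ℝ a P-integrable measurable function with centered version f̄ := f − E_P[f], such that Λ(c) := log E_P[exp(c·f̄)] is finite for every c > 0. Suppose η₊ := lim_{c → ∞}( c·Λ′(c) − Λ(c) ) is finite. Then f̄ is P-essentially bounded above, and for every η ≥ η₊: inf_{c>0} (Λ(c) + η)/c = ess sup_P f̄, the P-essential supremum of f − E_P[f]. -/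
open MeasureTheory Real Filter Set
open scoped Classical

lemma uq_bound (k : ℕ) {b B c x : ℝ} (hb : 0 < b) (hbc : b ≤ c) (hcB : c ≤ B) :
    |x| ^ k * Real.exp (c * x) ≤
      Real.exp ((B + k) * x) + (2 * k / b) ^ k * Real.exp (b / 2 * x) := by
  rcases le_or_gt 0 x with hx | hx
  · have h1 : |x| ^ k ≤ Real.exp (k * x) := by
      rw [abs_of_nonneg hx]
      calc x ^ k ≤ Real.exp x ^ k := by
            exact pow_le_pow_left₀ hx (le_trans (by linarith) (Real.add_one_le_exp x)) k
        _ = Real.exp (k * x) := by rw [← Real.exp_nat_mul]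
    have h2 : Real.exp (c * x) ≤ Real.exp (B * x) :=
      Real.exp_le_exp.mpr (mul_le_mul_of_nonneg_right hcB hx)
    have : |x| ^ k * Real.exp (c * x) ≤ Real.exp (k * x) * Real.exp (B * x) :=
      mul_le_mul h1 h2 (Real.exp_pos _).le (Real.exp_pos _).le
    rw [← Real.exp_add] at this
    refine le_trans this (le_add_of_le_of_nonneg (le_of_eq (by ring_nf)) ?_)
    positivity
  · refine le_trans ?_ (le_add_of_nonneg_left (Real.exp_pos _).le)
    rcases Nat.eq_zero_or_pos k with hk | hk
    · subst hk
      simp only [pow_zero, one_mul]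
      exact Real.exp_le_exp.mpr (by nlinarith)
    · have hkpos : (0:ℝ) < k := by exact_mod_cast hk
      -- |x| ≤ (2k/b) * exp (b/(2k) * (-x))
      have h1 : |x| ≤ 2 * k / b * Real.exp (b / (2 * k) * (-x)) := by
        have hy : b / (2 * k) * (-x) ≤ Real.exp (b / (2 * k) * (-x)) :=
          le_trans (by linarith [Real.add_one_le_exp (b / (2 * k) * (-x))]) le_rfl
        have hb2k : (0:ℝ) < 2 * k / b := by positivity
        rw [abs_of_neg hx]
        calc -x = (2 * k / b) * (b / (2 * k) * (-x)) := by field_simp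
          _ ≤ (2 * k / b) * Real.exp (b / (2 * k) * (-x)) := by
              exact mul_le_mul_of_nonneg_left hy hb2k.le
      have h2 : |x| ^ k ≤ (2 * k / b) ^ k * Real.exp (b / 2 * (-x)) := by
        calc |x| ^ k ≤ (2 * k / b * Real.exp (b / (2 * k) * (-x))) ^ k :=
              pow_le_pow_left₀ (abs_nonneg x) h1 k
          _ = (2 * k / b) ^ k * Real.exp (b / (2 * k) * (-x)) ^ k := mul_pow _ _ _
          _ = (2 * k / b) ^ k * Real.exp (k * (b / (2 * k) * (-x))) := by
              rw [← Real.exp_nat_mul]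
          _ = (2 * k / b) ^ k * Real.exp (b / 2 * (-x)) := by
              congr 2
              field_simp
      have h3 : Real.exp (c * x) ≤ Real.exp (b * x) :=
        Real.exp_le_exp.mpr (by nlinarith)
      calc |x| ^ k * Real.exp (c * x) ≤ ((2 * k / b) ^ k * Real.exp (b / 2 * (-x))) * Real.exp (b * x) := by
            apply mul_le_mul h2 h3 (Real.exp_pos _).le
            positivity
        _ = (2 * k / b) ^ k * Real.exp (b / 2 * x) := by
            rw [mul_assoc, ← Real.exp_add]
            congr 2
            ring

section
variable {Ω : Type*} [MeasurableSpace Ω] (P : Measure Ω) [IsProbabilityMeasure P]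
  (X : Ω → ℝ) (hX : Measurable X)
  (hfin : ∀ c : ℝ, 0 < c → Integrable (fun ω => Real.exp (c * X ω)) P)

include hX hfin in
lemma uq_int (k : ℕ) {c : ℝ} (hc : 0 < c) :
    Integrable (fun ω => |X ω| ^ k * Real.exp (c * X ω)) P := by
  have hint : Integrable
      (fun ω => Real.exp ((2 * c + k) * X ω) + (2 * k / (c/2)) ^ k * Real.exp (c/2/2 * X ω)) P := by
    refine (hfin _ (by positivity)).add ((hfin _ (by positivity)).const_mul _)
  refine hint.mono' ?_ ?_
  · exact ((hX.abs.pow_const k).mul ((hX.const_mul c).exp)).aestronglyMeasurable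
  · refine Eventually.of_forall fun ω => ?_
    rw [Real.norm_of_nonneg (by positivity)]
    exact uq_bound k (by positivity) (by linarith) (by linarith)

include hX hfin in
lemma uq_int' (k : ℕ) {c : ℝ} (hc : 0 < c) :
    Integrable (fun ω => (X ω) ^ k * Real.exp (c * X ω)) P := by
  refine (uq_int P X hX hfin k hc).mono' ?_ ?_
  · exact ((hX.pow_const k).mul ((hX.const_mul c).exp)).aestronglyMeasurable
  · refine Eventually.of_forall fun ω => ?_
    rw [Real.norm_eq_abs, abs_mul, abs_pow, abs_of_nonneg (Real.exp_pos _).le]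

include hX hfin in
lemma uq_hasDerivAt (k : ℕ) {c₀ : ℝ} (hc : 0 < c₀) :
    HasDerivAt (fun c => ∫ ω, (X ω) ^ k * Real.exp (c * X ω) ∂P)
      (∫ ω, (X ω) ^ (k + 1) * Real.exp (c₀ * X ω) ∂P) c₀ := by
  have key := hasDerivAt_integral_of_dominated_loc_of_deriv_le (𝕜 := ℝ)
    (F := fun c ω => (X ω) ^ k * Real.exp (c * X ω))
    (F' := fun c ω => (X ω) ^ (k + 1) * Real.exp (c * X ω))
    (x₀ := c₀)
    (bound := fun ω => Real.exp ((3 * c₀ / 2 + ((k+1 : ℕ) : ℝ)) * X ω)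
        + (2 * ((k+1 : ℕ) : ℝ) / (c₀/2)) ^ (k+1) * Real.exp (c₀/2/2 * X ω))
    (s := Metric.ball c₀ (c₀ / 2)) (Metric.ball_mem_nhds _ (by positivity))
    (Eventually.of_forall fun c =>
      ((hX.pow_const k).mul ((hX.const_mul c).exp)).aestronglyMeasurable)
    (uq_int' P X hX hfin k hc)
    (((hX.pow_const (k+1)).mul ((hX.const_mul c₀).exp)).aestronglyMeasurable)
    ?_ ?_ ?_
  · exact key.2
  · refine Eventually.of_forall fun ω => fun t ht => ?_
    rw [Metric.mem_ball, Real.dist_eq, abs_sub_lt_iff] at ht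
    rw [Real.norm_eq_abs, abs_mul, abs_pow, abs_of_nonneg (Real.exp_pos _).le]
    exact uq_bound (k+1) (by positivity) (by linarith) (by linarith)
  · refine ((hfin _ (by positivity)).add ((hfin _ (by positivity)).const_mul _))
  · refine Eventually.of_forall fun ω => fun t ht => ?_
    have h1 : HasDerivAt (fun c : ℝ => Real.exp (c * X ω)) (X ω * Real.exp (t * X ω)) t := by
      simpa [mul_comm] using ((hasDerivAt_mul_const (X ω)).exp)
    have := h1.const_mul ((X ω) ^ k)
    refine this.congr_deriv ?_
    ring

include hX hfin in
lemma uq_cs {c : ℝ} (hc : 0 < c) :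
    (∫ ω, (X ω) ^ 1 * Real.exp (c * X ω) ∂P) ^ 2
      ≤ (∫ ω, (X ω) ^ 2 * Real.exp (c * X ω) ∂P) * (∫ ω, (X ω) ^ 0 * Real.exp (c * X ω) ∂P) := by
  have hc2 : 0 < c / 2 := by positivity
  set u : Ω → ℝ := fun ω => |X ω| * Real.exp (c / 2 * X ω) with hu
  set v : Ω → ℝ := fun ω => Real.exp (c / 2 * X ω) with hv
  have hum : AEStronglyMeasurable u P :=
    (hX.abs.mul ((hX.const_mul _).exp)).aestronglyMeasurable
  have hvm : AEStronglyMeasurable v P := ((hX.const_mul _).exp).aestronglyMeasurable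
  have hhalf : ∀ ω, c / 2 * X ω + c / 2 * X ω = c * X ω := fun ω => by ring
  have husq : ∀ ω, u ω ^ 2 = (X ω) ^ 2 * Real.exp (c * X ω) := by
    intro ω
    show (|X ω| * Real.exp (c / 2 * X ω)) ^ 2 = _
    rw [mul_pow, sq_abs, sq (Real.exp _), ← Real.exp_add, hhalf ω]
  have hvsq : ∀ ω, v ω ^ 2 = Real.exp (c * X ω) := by
    intro ω
    show (Real.exp (c / 2 * X ω)) ^ 2 = _
    rw [sq (Real.exp _), ← Real.exp_add, hhalf ω]
  have huL : MemLp u 2 P := by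
    rw [memLp_two_iff_integrable_sq hum]
    refine ((uq_int P X hX hfin 2 hc).congr ?_)
    refine Eventually.of_forall fun ω => ?_
    show |X ω| ^ 2 * Real.exp (c * X ω) = u ω ^ 2
    rw [husq ω, sq_abs]
  have hvL : MemLp v 2 P := by
    rw [memLp_two_iff_integrable_sq hvm]
    refine (hfin c hc).congr (Eventually.of_forall fun ω => ?_)
    show Real.exp (c * X ω) = v ω ^ 2
    rw [hvsq ω]
  have hconj : Real.HolderConjugate 2 2 := ⟨by norm_num, by norm_num, by norm_num⟩
  have hold := integral_mul_le_Lp_mul_Lq_of_nonneg (μ := P) hconj (f := u) (g := v)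
    (Eventually.of_forall fun ω => by positivity)
    (Eventually.of_forall fun ω => (Real.exp_pos _).le)
    (by rw [ENNReal.ofReal_ofNat]; exact huL) (by rw [ENNReal.ofReal_ofNat]; exact hvL)
  have habs : |∫ ω, (X ω) ^ 1 * Real.exp (c * X ω) ∂P| ≤ ∫ ω, u ω * v ω ∂P := by
    calc |∫ ω, (X ω) ^ 1 * Real.exp (c * X ω) ∂P|
        = ‖∫ ω, (X ω) ^ 1 * Real.exp (c * X ω) ∂P‖ := (Real.norm_eq_abs _).symm
      _ ≤ ∫ ω, ‖(X ω) ^ 1 * Real.exp (c * X ω)‖ ∂P := norm_integral_le_integral_norm _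
      _ = ∫ ω, u ω * v ω ∂P := by
          refine integral_congr_ae (Eventually.of_forall fun ω => ?_)
          show ‖X ω ^ 1 * Real.exp (c * X ω)‖ = u ω * v ω
          rw [Real.norm_eq_abs, abs_mul, abs_of_nonneg (Real.exp_pos _).le, pow_one]
          show |X ω| * Real.exp (c * X ω) = |X ω| * Real.exp (c / 2 * X ω) * Real.exp (c / 2 * X ω)
          rw [mul_assoc, ← Real.exp_add, hhalf ω]
  have hrw2 : (∫ ω, u ω ^ (2:ℝ) ∂P) = ∫ ω, (X ω) ^ 2 * Real.exp (c * X ω) ∂P := by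
    refine integral_congr_ae (Eventually.of_forall fun ω => ?_)
    show u ω ^ (2:ℝ) = X ω ^ 2 * Real.exp (c * X ω)
    rw [show ((2:ℝ)) = ((2:ℕ):ℝ) by norm_num, Real.rpow_natCast, husq ω]
  have hrw0 : (∫ ω, v ω ^ (2:ℝ) ∂P) = ∫ ω, (X ω) ^ 0 * Real.exp (c * X ω) ∂P := by
    refine integral_congr_ae (Eventually.of_forall fun ω => ?_)
    show v ω ^ (2:ℝ) = X ω ^ 0 * Real.exp (c * X ω)
    rw [show ((2:ℝ)) = ((2:ℕ):ℝ) by norm_num, Real.rpow_natCast, hvsq ω, pow_zero, one_mul]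
  rw [hrw2, hrw0] at hold
  set A := ∫ ω, (X ω) ^ 2 * Real.exp (c * X ω) ∂P
  set B := ∫ ω, (X ω) ^ 0 * Real.exp (c * X ω) ∂P
  have hA : 0 ≤ A := integral_nonneg fun ω => by positivity
  have hB : 0 ≤ B := integral_nonneg fun ω => by positivity
  have h1 : |∫ ω, (X ω) ^ 1 * Real.exp (c * X ω) ∂P| ≤ A ^ ((1:ℝ)/2) * B ^ ((1:ℝ)/2) := by
    refine le_trans habs (le_trans hold (le_of_eq ?_))
    norm_num
  have h2 : (∫ ω, (X ω) ^ 1 * Real.exp (c * X ω) ∂P) ^ 2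
      ≤ (A ^ ((1:ℝ)/2) * B ^ ((1:ℝ)/2)) ^ 2 := by
    rw [← sq_abs]
    exact pow_le_pow_left₀ (abs_nonneg _) h1 2
  refine le_trans h2 (le_of_eq ?_)
  rw [mul_pow, ← Real.rpow_natCast (A ^ ((1:ℝ)/2)) 2, ← Real.rpow_natCast (B ^ ((1:ℝ)/2)) 2,
    ← Real.rpow_mul hA, ← Real.rpow_mul hB]
  norm_num

include hX hfin in
lemma uq_master (Λ : ℝ → ℝ)
    (hΛ : Λ = fun c => Real.log (∫ ω, Real.exp (c * X ω) ∂P))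
    (ηplus : ℝ)
    (hηlim : Tendsto (fun c : ℝ => c * deriv Λ c - Λ c) atTop (nhds ηplus)) :
    ∃ M : ℝ, Tendsto (fun c => Λ c / c) atTop (nhds M)
      ∧ (∀ c : ℝ, 0 < c → M ≤ Λ c / c + ηplus / c)
      ∧ (∀ᵐ ω ∂P, X ω ≤ M) := by
  set m0 : ℝ → ℝ := fun c => ∫ ω, (X ω) ^ 0 * Real.exp (c * X ω) ∂P with hm0def
  set m1 : ℝ → ℝ := fun c => ∫ ω, (X ω) ^ 1 * Real.exp (c * X ω) ∂P with hm1def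
  set m2 : ℝ → ℝ := fun c => ∫ ω, (X ω) ^ 2 * Real.exp (c * X ω) ∂P with hm2def
  have hm0eq : ∀ c : ℝ, m0 c = ∫ ω, Real.exp (c * X ω) ∂P := by
    intro c
    refine integral_congr_ae (Eventually.of_forall fun ω => ?_)
    show X ω ^ 0 * Real.exp (c * X ω) = Real.exp (c * X ω)
    rw [pow_zero, one_mul]
  have hm0pos : ∀ c : ℝ, 0 < c → 0 < m0 c := by
    intro c hc
    rw [hm0eq]
    have := ProbabilityTheory.mgf_pos (μ := P) (X := X) (t := c) (hfin c hc)
    simpa [ProbabilityTheory.mgf] using this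
  have hΛeq : Λ = fun c => Real.log (m0 c) := by
    rw [hΛ]; funext c; rw [hm0eq]
  set L : ℝ → ℝ := fun c => m1 c / m0 c with hLdef
  have hΛd : ∀ c : ℝ, 0 < c → HasDerivAt Λ (L c) c := by
    intro c hc
    rw [hΛeq]
    exact (uq_hasDerivAt P X hX hfin 0 hc).log (hm0pos c hc).ne'
  set V : ℝ → ℝ := fun c => (m2 c * m0 c - m1 c * m1 c) / (m0 c) ^ 2 with hVdef
  have hLd : ∀ c : ℝ, 0 < c → HasDerivAt L (V c) c := by
    intro c hc
    exact (uq_hasDerivAt P X hX hfin 1 hc).div (uq_hasDerivAt P X hX hfin 0 hc)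
      (hm0pos c hc).ne'
  have hVnonneg : ∀ c : ℝ, 0 < c → 0 ≤ V c := by
    intro c hc
    apply div_nonneg _ (sq_nonneg _)
    have := uq_cs P X hX hfin hc
    nlinarith [this]
  set φ : ℝ → ℝ := fun c => c * L c - Λ c with hφdef
  have hφd : ∀ c : ℝ, 0 < c → HasDerivAt φ (c * V c) c := by
    intro c hc
    have h1 : HasDerivAt (fun c => c * L c) (1 * L c + c * V c) c :=
      (hasDerivAt_id c).mul (hLd c hc)
    have h2 := h1.sub (hΛd c hc)
    refine h2.congr_deriv ?_
    ring
  have hφmono : MonotoneOn φ (Ioi (0:ℝ)) := by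
    apply monotoneOn_of_deriv_nonneg (convex_Ioi 0)
    · exact fun x hx => (hφd x hx).continuousAt.continuousWithinAt
    · intro x hx
      rw [interior_Ioi] at hx
      exact (hφd x hx).differentiableAt.differentiableWithinAt
    · intro x hx
      rw [interior_Ioi] at hx
      rw [(hφd x hx).deriv]
      exact mul_nonneg hx.le (hVnonneg x hx)
  have hφlim : Tendsto φ atTop (nhds ηplus) := by
    refine hηlim.congr' ?_
    filter_upwards [eventually_gt_atTop (0:ℝ)] with c hc
    rw [(hΛd c hc).deriv]
  have hφle : ∀ c : ℝ, 0 < c → φ c ≤ ηplus := by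
    intro c hc
    refine ge_of_tendsto hφlim ?_
    filter_upwards [eventually_ge_atTop c, eventually_gt_atTop (0:ℝ)] with x hx hx0
    exact hφmono hc hx0 hx
  set ψ : ℝ → ℝ := fun c => Λ c / c with hψdef
  have hψd : ∀ c : ℝ, 0 < c → HasDerivAt ψ ((L c * c - Λ c * 1) / c ^ 2) c := by
    intro c hc
    exact (hΛd c hc).div (hasDerivAt_id c) hc.ne'
  set χ : ℝ → ℝ := fun c => ψ c + ηplus / c with hχdef
  have hχd : ∀ c : ℝ, 0 < c → HasDerivAt χ ((φ c - ηplus) / c ^ 2) c := by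
    intro c hc
    have h1 : HasDerivAt (fun c : ℝ => ηplus / c) ((0 * c - ηplus * 1) / c ^ 2) c :=
      (hasDerivAt_const c ηplus).div (hasDerivAt_id c) hc.ne'
    have h2 := (hψd c hc).add h1
    refine h2.congr_deriv ?_
    rw [hφdef]
    field_simp
    ring
  have hχanti : AntitoneOn χ (Ioi (0:ℝ)) := by
    apply antitoneOn_of_deriv_nonpos (convex_Ioi 0)
    · exact fun x hx => (hχd x hx).continuousAt.continuousWithinAt
    · intro x hx
      rw [interior_Ioi] at hx
      exact (hχd x hx).differentiableAt.differentiableWithinAt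
    · intro x hx
      rw [interior_Ioi] at hx
      rw [(hχd x hx).deriv]
      apply div_nonpos_of_nonpos_of_nonneg _ (sq_nonneg _)
      linarith [hφle x hx]
  set ξ : ℝ → ℝ := fun c => ψ c + φ 1 / c with hξdef
  have hξd : ∀ c : ℝ, 0 < c → HasDerivAt ξ ((φ c - φ 1) / c ^ 2) c := by
    intro c hc
    have h1 : HasDerivAt (fun c : ℝ => φ 1 / c) ((0 * c - φ 1 * 1) / c ^ 2) c :=
      (hasDerivAt_const c (φ 1)).div (hasDerivAt_id c) hc.ne'
    have h2 := (hψd c hc).add h1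
    refine h2.congr_deriv ?_
    rw [hφdef]
    field_simp
    ring
  have hξmono : MonotoneOn ξ (Ici (1:ℝ)) := by
    apply monotoneOn_of_deriv_nonneg (convex_Ici 1)
    · exact fun x hx => (hξd x (lt_of_lt_of_le one_pos hx)).continuousAt.continuousWithinAt
    · intro x hx
      rw [interior_Ici] at hx
      exact (hξd x (lt_trans one_pos hx)).differentiableAt.differentiableWithinAt
    · intro x hx
      rw [interior_Ici] at hx
      have hx0 : (0:ℝ) < x := lt_trans one_pos hx
      rw [(hξd x hx0).deriv]
      apply div_nonneg _ (sq_nonneg _)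
      have := hφmono (show (1:ℝ) ∈ Ioi (0:ℝ) by norm_num) (show x ∈ Ioi (0:ℝ) from hx0) hx.le
      linarith
  -- lower bound for χ on [1, ∞)
  set lb : ℝ := ψ 1 + φ 1 - |φ 1| - |ηplus| with hlbdef
  have hlb : ∀ c : ℝ, 1 ≤ c → lb ≤ χ c := by
    intro c hc
    have hc0 : (0:ℝ) < c := lt_of_lt_of_le one_pos hc
    have h1 : ξ 1 ≤ ξ c := hξmono (by norm_num) hc hc
    have h2 : |φ 1 / c| ≤ |φ 1| := by
      rw [abs_div, abs_of_pos hc0]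
      exact div_le_self (abs_nonneg _) hc
    have h3 : |ηplus / c| ≤ |ηplus| := by
      rw [abs_div, abs_of_pos hc0]
      exact div_le_self (abs_nonneg _) hc
    have h2' := abs_le.mp h2
    have h3' := abs_le.mp h3
    have hξ1 : ξ 1 = ψ 1 + φ 1 := by rw [hξdef]; norm_num
    have hξc : ξ c = ψ c + φ 1 / c := rfl
    have hχc : χ c = ψ c + ηplus / c := rfl
    rw [hχc, hlbdef]
    rw [hξ1, hξc] at h1
    linarith
  -- the antitone extension
  set χt : ℝ → ℝ := fun c => χ (max c 1) with hχtdef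
  have hχtanti : Antitone χt := by
    intro a b hab
    exact hχanti (lt_of_lt_of_le one_pos (le_max_right a 1))
      (lt_of_lt_of_le one_pos (le_max_right b 1)) (max_le_max hab le_rfl)
  have hbdd : BddBelow (Set.range χt) := by
    refine ⟨lb, ?_⟩
    rintro y ⟨c, rfl⟩
    exact hlb _ (le_max_right c 1)
  have hMtend : Tendsto χt atTop (nhds (⨅ c, χt c)) := tendsto_atTop_ciInf hχtanti hbdd
  set M : ℝ := ⨅ c, χt c with hMdef
  have hχlim : Tendsto χ atTop (nhds M) := by
    refine hMtend.congr' ?_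
    filter_upwards [eventually_ge_atTop (1:ℝ)] with c hc
    rw [hχtdef]
    simp only [max_eq_left hc]
  have hdiv0 : Tendsto (fun c : ℝ => ηplus / c) atTop (nhds 0) :=
    tendsto_const_nhds.div_atTop tendsto_id
  have hψlim : Tendsto ψ atTop (nhds M) := by
    have := hχlim.sub hdiv0
    rw [sub_zero] at this
    refine this.congr fun c => ?_
    rw [hχdef]
    ring
  have hMle : ∀ c : ℝ, 0 < c → M ≤ ψ c + ηplus / c := by
    intro c hc
    have h1 : M ≤ χt c := ciInf_le hbdd c
    have h2 : χ (max c 1) ≤ χ c :=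
      hχanti hc (lt_of_lt_of_le one_pos (le_max_right c 1)) (le_max_left c 1)
    exact le_trans h1 h2
  -- Chernoff bound
  have hchern : ∀ ε : ℝ, 0 < ε → P {ω | M + ε ≤ X ω} = 0 := by
    intro ε hε
    have hev : ∀ᶠ c : ℝ in atTop, (P {ω | M + ε ≤ X ω}).toReal ≤ Real.exp (-(ε/2) * c) := by
      have hψev : ∀ᶠ c : ℝ in atTop, ψ c < M + ε / 2 :=
        hψlim.eventually (Iio_mem_nhds (by linarith))
      filter_upwards [hψev, eventually_gt_atTop (0:ℝ)] with c hψc hc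
      have hbase := ProbabilityTheory.measure_ge_le_exp_mul_mgf (μ := P) (X := X)
        (ε := M + ε) (t := c) hc.le (hfin c hc)
      have hmgf : ProbabilityTheory.mgf X P c = Real.exp (Λ c) := by
        rw [hΛ]
        rw [Real.exp_log]
        · rfl
        · have := hm0pos c hc; rwa [hm0eq] at this
      rw [hmgf, ← Real.exp_add] at hbase
      refine le_trans hbase (Real.exp_le_exp.mpr ?_)
      have hΛc : Λ c = ψ c * c := by
        rw [hψdef]
        field_simp
      rw [hΛc]
      have : ψ c * c ≤ (M + ε/2) * c := mul_le_mul_of_nonneg_right hψc.le hc.le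
      nlinarith
    have htend : Tendsto (fun c : ℝ => Real.exp (-(ε/2) * c)) atTop (nhds 0) := by
      apply Real.tendsto_exp_atBot.comp
      have h1 : Tendsto (fun c : ℝ => (ε/2) * c) atTop atTop :=
        Tendsto.const_mul_atTop (by positivity) tendsto_id
      have h2 : Tendsto (fun c : ℝ => -((ε/2) * c)) atTop atBot := tendsto_neg_atBot_iff.mpr h1
      exact h2.congr fun c => by ring
    have hle0 : (P {ω | M + ε ≤ X ω}).toReal ≤ 0 := ge_of_tendsto htend hev
    have h0 : (P {ω | M + ε ≤ X ω}).toReal = 0 := le_antisymm hle0 ENNReal.toReal_nonneg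
    rw [ENNReal.toReal_eq_zero_iff] at h0
    rcases h0 with h0 | h0
    · exact h0
    · exact absurd h0 (measure_ne_top P _)
  have hae : ∀ᵐ ω ∂P, X ω ≤ M := by
    rw [ae_iff]
    have hsub : {ω | ¬ X ω ≤ M} ⊆ ⋃ n : ℕ, {ω | M + 1/(n+1) ≤ X ω} := by
      intro ω hω
      simp only [Set.mem_setOf_eq, not_le] at hω
      obtain ⟨n, hn⟩ := exists_nat_one_div_lt (sub_pos.mpr hω)
      refine Set.mem_iUnion.mpr ⟨n, ?_⟩
      simp only [Set.mem_setOf_eq]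
      push_cast
      push_cast at hn
      linarith
    refine measure_mono_null hsub (measure_iUnion_null fun n => hchern _ (by positivity))
  exact ⟨M, hψlim, hMle, hae⟩

end

/-- **Lemma A.2, part 3(b)**: if `Λ(c) = log E_P[exp(c f̄)]` is finite for all `c > 0`
and `η₊ = lim_{c→∞}(c Λ′(c) − Λ(c))` is finite, then `f̄ = f − E_P[f]` is `P`-essentially
bounded above and, for every `η ≥ η₊`, `inf_{c>0} (Λ(c)+η)/c = ess sup_P f̄`. -/
theorem uq_objective_large_eta_infinite_endpoint {Ω : Type*} [MeasurableSpace Ω]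
    (P : Measure Ω) [IsProbabilityMeasure P]
    (f : Ω → ℝ) (hf : Measurable f) (hfP : Integrable f P)
    (fbar : Ω → ℝ) (hfbar : fbar = fun ω => f ω - ∫ x, f x ∂P)
    (Λ : ℝ → ℝ) (hΛ : Λ = fun c => Real.log (∫ ω, Real.exp (c * fbar ω) ∂P))
    (hfin : ∀ c : ℝ, 0 < c → Integrable (fun ω => Real.exp (c * fbar ω)) P)
    (ηplus : ℝ)
    (hηlim : Tendsto (fun c : ℝ => c * deriv Λ c - Λ c) atTop (nhds ηplus)) :
    (∃ M : ℝ, ∀ᵐ ω ∂P, fbar ω ≤ M) ∧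
    (∀ η : ℝ, ηplus ≤ η →
      ⨅ c ∈ Set.Ioi (0 : ℝ), uqObj P fbar η c
        = essSup (fun ω => ((fbar ω : ℝ) : EReal)) P) := by
  have hXm : Measurable fbar := by rw [hfbar]; exact hf.sub measurable_const
  obtain ⟨M, hψlim, hMle, hae⟩ := uq_master P fbar hXm hfin Λ hΛ ηplus hηlim
  have hΛc : ∀ c : ℝ, Λ c = Real.log (∫ ω, Real.exp (c * fbar ω) ∂P) := fun c => by rw [hΛ]
  refine ⟨⟨M, hae⟩, ?_⟩
  intro η hη
  -- rewrite the objective on Ioi 0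
  have huq : ∀ c : ℝ, c ∈ Set.Ioi (0:ℝ) →
      uqObj P fbar η c = (((Λ c / c + η / c : ℝ)) : EReal) := by
    intro c hc
    rw [uqObj, if_pos (hfin c hc)]
    norm_cast
    rw [hΛc c]
    ring
  have hinf_rw : (⨅ c ∈ Set.Ioi (0:ℝ), uqObj P fbar η c)
      = ⨅ c ∈ Set.Ioi (0:ℝ), (((Λ c / c + η / c : ℝ)) : EReal) :=
    iInf_congr fun c => iInf_congr fun hc => huq c hc
  -- the infimum equals M
  have hinf : (⨅ c ∈ Set.Ioi (0:ℝ), (((Λ c / c + η / c : ℝ)) : EReal)) = (M : EReal) := by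
    apply le_antisymm
    · -- inf ≤ M via a sequence tending to M
      have hreal : Tendsto (fun c : ℝ => Λ c / c + η / c) atTop (nhds M) := by
        have h2 : Tendsto (fun c : ℝ => η / c) atTop (nhds 0) :=
          tendsto_const_nhds.div_atTop tendsto_id
        have := hψlim.add h2
        rwa [add_zero] at this
      have hseqR : Tendsto (fun n : ℕ => ((n:ℝ) + 1)) atTop atTop :=
        tendsto_atTop_add_const_right _ 1 tendsto_natCast_atTop_atTop
      have hseq : Tendsto
          (fun n : ℕ => (((Λ ((n:ℝ)+1) / ((n:ℝ)+1) + η / ((n:ℝ)+1) : ℝ)) : EReal))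
          atTop (nhds (M : EReal)) :=
        (continuous_coe_real_ereal.tendsto M).comp (hreal.comp hseqR)
      refine ge_of_tendsto hseq (Eventually.of_forall fun n => ?_)
      exact iInf₂_le ((n:ℝ)+1) (Set.mem_Ioi.mpr (by positivity))
    · refine le_iInf fun c => le_iInf fun hc => ?_
      have hc0 : (0:ℝ) < c := hc
      rw [EReal.coe_le_coe_iff]
      have h1 : ηplus / c ≤ η / c := by gcongr
      linarith [hMle c hc0]
  -- essSup equals M
  have hsle : essSup (fun ω => ((fbar ω : ℝ) : EReal)) P ≤ (M : EReal) :=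
    essSup_le_of_ae_le _ (hae.mono fun ω h => EReal.coe_le_coe_iff.mpr h)
  have hsge : (M : EReal) ≤ essSup (fun ω => ((fbar ω : ℝ) : EReal)) P := by
    set s := essSup (fun ω => ((fbar ω : ℝ) : EReal)) P with hsdef
    haveI : (MeasureTheory.ae P).NeBot := ae_neBot.mpr (IsProbabilityMeasure.ne_zero P)
    have haes : ∀ᵐ ω ∂P, ((fbar ω : ℝ) : EReal) ≤ s := ae_le_essSup
    have hstop : s ≠ ⊤ := (lt_of_le_of_lt hsle (EReal.coe_lt_top M)).ne
    have hsbot : s ≠ ⊥ := by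
      obtain ⟨ω₀, hω₀⟩ := haes.exists
      exact ((EReal.bot_lt_coe (fbar ω₀)).trans_le hω₀).ne'
    set r := s.toReal with hrdef
    have hsr : s = (r : EReal) := (EReal.coe_toReal hstop hsbot).symm
    have haer : ∀ᵐ ω ∂P, fbar ω ≤ r := by
      refine haes.mono fun ω h => ?_
      rw [hsr] at h
      exact EReal.coe_le_coe_iff.mp h
    have hψler : ∀ c : ℝ, 0 < c → Λ c / c ≤ r := by
      intro c hc
      have hpos : 0 < ∫ ω, Real.exp (c * fbar ω) ∂P := by
        have := ProbabilityTheory.mgf_pos (μ := P) (X := fbar) (t := c) (hfin c hc)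
        simpa [ProbabilityTheory.mgf] using this
      have hint : (∫ ω, Real.exp (c * fbar ω) ∂P) ≤ Real.exp (c * r) := by
        calc (∫ ω, Real.exp (c * fbar ω) ∂P)
            ≤ ∫ _ω, Real.exp (c * r) ∂P := by
              refine integral_mono_ae (hfin c hc) (integrable_const _) ?_
              exact haer.mono fun ω h =>
                Real.exp_le_exp.mpr (mul_le_mul_of_nonneg_left h hc.le)
          _ = Real.exp (c * r) := by simp [measure_univ]
      have hΛle : Λ c ≤ c * r := by
        rw [hΛc c]
        calc Real.log (∫ ω, Real.exp (c * fbar ω) ∂P)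
            ≤ Real.log (Real.exp (c * r)) := Real.log_le_log hpos hint
          _ = c * r := Real.log_exp _
      rw [div_le_iff₀ hc]
      linarith [mul_comm c r]
    have hMr : M ≤ r := by
      refine le_of_tendsto hψlim ?_
      filter_upwards [eventually_gt_atTop (0:ℝ)] with c hc
      exact hψler c hc
    rw [hsr] at hsdef ⊢
    exact EReal.coe_le_coe_iff.mpr hMr
  rw [hinf_rw, hinf]
  exact le_antisymm hsge hsle
end

section
/- Let μ be a probability measure on a measurable space X, κ a Markov kernel from X to a measurable space Y, and P := μ ⊗ κ their composition-product measure on X × Y. Let f : Y → ℝ be measurable and c > 0 be such that Z := ∫_X ∫_Y exp(c·f(y)) κ(x)(dy) μ(dx) is finite, and assume Z(x) := ∫_Y exp(c·f(y)) κ(x)(dy) is finite for every x. Define Q as the probability measure on X × Y with density (x,y) ↦ exp(c·f(y))/Z with respect to P. Then Q = μ_c ⊗ κ_c, where κ_c is the Markov kernel whose value κ_c(x) has density y ↦ exp(c·f(y))/Z(x) with respect to κ(x), and μ_c is the probability measure with density x ↦ Z(x)/Z with respect to μ. In other words, the exponential tilt of a two-stage model by a function of the final coordinate is again a two-stage model,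 with tilted conditional distribution and tilted marginal. -/
open MeasureTheory ProbabilityTheory Real Filter Set
open scoped ENNReal ProbabilityTheory

/-- **Theorem 2.1(b), two-stage instance**: the exponential tilt of a two-stage model
`P = μ ⊗ κ` by `exp(c f(y))/Z` factorizes as `μ_c ⊗ κ_c`, where `κ_c(x)` has density
`exp(c f(y))/Z(x)` with respect to `κ(x)` and `μ_c` has density `Z(x)/Z` with respect
to `μ`. -/
theorem tilt_compProd_factorizes {X Y : Type*} [MeasurableSpace X] [MeasurableSpace Y]
    (μ : Measure X) [IsProbabilityMeasure μ]
    (κ : Kernel X Y) [IsMarkovKernel κ]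
    (f : Y → ℝ) (hf : Measurable f) (c : ℝ) (hc : 0 < c)
    (hZ : Integrable (fun p : X × Y => Real.exp (c * f p.2)) (μ ⊗ₘ κ))
    (hZx : ∀ x : X, Integrable (fun y => Real.exp (c * f y)) (κ x))
    (Q : Measure (X × Y))
    (hQ : Q = (μ ⊗ₘ κ).withDensity (fun p =>
      ENNReal.ofReal (Real.exp (c * f p.2)
        / ∫ q : X × Y, Real.exp (c * f q.2) ∂(μ ⊗ₘ κ))))
    (κc : Kernel X Y)
    (hκc : ∀ x : X, κc x = (κ x).withDensity (fun y =>
      ENNReal.ofReal (Real.exp (c * f y) / ∫ y', Real.exp (c * f y') ∂(κ x))))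
    (μc : Measure X)
    (hμc : μc = μ.withDensity (fun x =>
      ENNReal.ofReal ((∫ y', Real.exp (c * f y') ∂(κ x))
        / ∫ q : X × Y, Real.exp (c * f q.2) ∂(μ ⊗ₘ κ)))) :
    Q = μc ⊗ₘ κc := by
  set Z : ℝ := ∫ q : X × Y, Real.exp (c * f q.2) ∂(μ ⊗ₘ κ) with hZdef
  set Zx : X → ℝ := fun x => ∫ y, Real.exp (c * f y) ∂(κ x) with hZxdef
  have hemeas : Measurable fun y => Real.exp (c * f y) :=
    Real.measurable_exp.comp (measurable_const.mul hf)
  have hZpos : 0 < Z := by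
    rw [hZdef]
    refine (integral_pos_iff_support_of_nonneg (fun p => (Real.exp_pos _).le) hZ).2 ?_
    have : (Function.support fun p : X × Y => Real.exp (c * f p.2)) = Set.univ := by
      ext p; simp [Function.support, Real.exp_ne_zero]
    simp [this]
  have hZxpos : ∀ x, 0 < Zx x := by
    intro x
    refine (integral_pos_iff_support_of_nonneg (fun y => (Real.exp_pos _).le) (hZx x)).2 ?_
    have : (Function.support fun y : Y => Real.exp (c * f y)) = Set.univ := by
      ext y; simp [Function.support, Real.exp_ne_zero]
    simp [this]
  have hZxmeas : Measurable Zx := by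
    have : StronglyMeasurable fun p : X × Y => Real.exp (c * f p.2) :=
      (hemeas.comp measurable_snd).stronglyMeasurable
    exact this.integral_kernel_prod_right'.measurable
  have hdmeas : Measurable fun p : X × Y => ENNReal.ofReal (Real.exp (c * f p.2) / Z) :=
    ENNReal.measurable_ofReal.comp ((hemeas.comp measurable_snd).div_const Z)
  have hμdmeas : Measurable fun x => ENNReal.ofReal (Zx x / Z) :=
    ENNReal.measurable_ofReal.comp (hZxmeas.div_const Z)
  have hκcM : IsMarkovKernel κc := by
    refine ⟨fun x => ⟨?_⟩⟩
    rw [hκc x, withDensity_apply _ MeasurableSet.univ, setLIntegral_univ,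
      ← ofReal_integral_eq_lintegral_ofReal ((hZx x).div_const _)
        (ae_of_all _ fun y => by positivity), integral_div]
    rw [div_self (hZxpos x).ne', ENNReal.ofReal_one]
  have hμcS : SFinite μc := hμc ▸ inferInstance
  ext s hs
  rw [hQ, withDensity_apply _ hs, ← lintegral_indicator hs _,
    Measure.lintegral_compProd (hdmeas.indicator hs),
    Measure.compProd_apply hs, hμc,
    lintegral_withDensity_eq_lintegral_mul _ hμdmeas (Kernel.measurable_kernel_prodMk_left hs)]
  refine lintegral_congr fun x => ?_
  simp only [Pi.mul_apply]
  rw [hκc x, withDensity_apply _ (measurable_prodMk_left hs),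
    ← lintegral_const_mul _ ((hemeas.div_const _).ennreal_ofReal),
    ← lintegral_indicator (measurable_prodMk_left hs)]
  refine lintegral_congr fun y => ?_
  by_cases hy : (x, y) ∈ s
  · simp only [Set.indicator_of_mem hy, Set.indicator_of_mem (Set.mem_preimage.2 hy)]
    rw [← ENNReal.ofReal_mul (by positivity)]
    congr 1
    have hx : (∫ y', Real.exp (c * f y') ∂κ x) = Zx x := rfl
    rw [hx]
    have h1 : Zx x ≠ 0 := (hZxpos x).ne'
    have h2 : Z ≠ 0 := hZpos.ne'
    field_simp
  · simp only [Set.indicator_of_notMem hy,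
      Set.indicator_of_notMem (fun h => hy (Set.mem_preimage.1 h))]
end

section
/- Let P = gaussianReal m (σ²) be the Gaussian probability measure on ℝ with mean m and variance σ² > 0, let a ≠ 0 and b be real numbers, f(x) := a·x + b, and let η > 0. Then sup { ∫ f dQ − ∫ f dP : Q a probability measure on ℝ, Q ≪ P, f Q-integrable, kl(Q‖P) ≤ η } = √(2·a²·σ²·η), and inf over the same set of Q of ∫ f dQ − ∫ f dP equals −√(2·a²·σ²·η); both extrema are attained. -/
open MeasureTheory ProbabilityTheory Real Filter Set
open scoped Classical NNReal ENNReal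

namespace GaussAux

variable {m : ℝ} {v : ℝ≥0}

lemma vpos (hv : v ≠ 0) : (0:ℝ) < (v:ℝ) := by
  exact_mod_cast pos_iff_ne_zero.mpr hv

lemma aux_pdf_mul (m : ℝ) (hv : v ≠ 0) (c x : ℝ) :
    rexp (c * x) * gaussianPDFReal m v x
      = rexp (c * m + c ^ 2 * (v:ℝ) / 2) * gaussianPDFReal (m + c * (v:ℝ)) v x := by
  have hV : (0:ℝ) < (v:ℝ) := vpos hv
  unfold gaussianPDFReal
  rw [mul_left_comm, ← Real.exp_add, mul_left_comm, ← Real.exp_add]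
  congr 1
  field_simp
  ring

lemma integral_gaussianReal_eq (m : ℝ) (hv : v ≠ 0) (f : ℝ → ℝ) :
    ∫ x, f x ∂(gaussianReal m v) = ∫ x, gaussianPDFReal m v x * f x := by
  rw [gaussianReal_of_var_ne_zero m hv]
  have h : gaussianPDF m v = fun x => ((gaussianPDFReal m v x).toNNReal : ℝ≥0∞) := rfl
  rw [h, integral_withDensity_eq_integral_smul
    (measurable_gaussianPDFReal m v).real_toNNReal f]
  congr 1 with x
  simp [NNReal.smul_def, Real.coe_toNNReal _ (gaussianPDFReal_nonneg m v x)]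

lemma integrable_gaussianReal_iff (m : ℝ) (hv : v ≠ 0) (f : ℝ → ℝ) :
    Integrable f (gaussianReal m v) ↔
      Integrable (fun x => gaussianPDFReal m v x * f x) volume := by
  rw [gaussianReal_of_var_ne_zero m hv]
  have h : gaussianPDF m v = fun x => ((gaussianPDFReal m v x).toNNReal : ℝ≥0∞) := rfl
  rw [h, integrable_withDensity_iff_integrable_smul
    (measurable_gaussianPDFReal m v).real_toNNReal]
  constructor <;> intro h' <;> refine h'.congr (ae_of_all _ fun x => ?_) <;>
    simp [NNReal.smul_def, Real.coe_toNNReal _ (gaussianPDFReal_nonneg m v x)]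

lemma integrable_exp_mul (m : ℝ) (hv : v ≠ 0) (c : ℝ) :
    Integrable (fun x => rexp (c * x)) (gaussianReal m v) := by
  rw [integrable_gaussianReal_iff m hv]
  have h : (fun x => gaussianPDFReal m v x * rexp (c * x))
      = fun x => rexp (c * m + c ^ 2 * (v:ℝ) / 2) * gaussianPDFReal (m + c * (v:ℝ)) v x := by
    funext x; rw [mul_comm, aux_pdf_mul m hv]
  rw [h]
  exact (integrable_gaussianPDFReal _ _).const_mul _

lemma integral_exp_mul (m : ℝ) (hv : v ≠ 0) (c : ℝ) :
    ∫ x, rexp (c * x) ∂(gaussianReal m v) = rexp (c * m + c ^ 2 * (v:ℝ) / 2) := by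
  rw [integral_gaussianReal_eq m hv]
  have h : (fun x => gaussianPDFReal m v x * rexp (c * x))
      = fun x => rexp (c * m + c ^ 2 * (v:ℝ) / 2) * gaussianPDFReal (m + c * (v:ℝ)) v x := by
    funext x; rw [mul_comm, aux_pdf_mul m hv]
  rw [h, integral_const_mul, integral_gaussianPDFReal_eq_one _ hv, mul_one]

lemma integrable_id_gaussianReal (m : ℝ) (hv : v ≠ 0) :
    Integrable (fun x => x) (gaussianReal m v) := by
  have h1 := integrable_exp_mul m hv 1
  have h2 := integrable_exp_mul m hv (-1)
  refine (h1.add h2).mono' aestronglyMeasurable_id (ae_of_all _ fun x => ?_)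
  have hx : |x| + 1 ≤ rexp |x| := Real.add_one_le_exp _
  have hx2 : rexp |x| ≤ rexp x + rexp (-x) := by
    rcases abs_cases x with ⟨h, _⟩ | ⟨h, _⟩ <;> rw [h] <;>
      [linarith [Real.exp_pos (-x)]; linarith [Real.exp_pos x]]
  have he : rexp (1 * x) = rexp x := by norm_num
  have he2 : rexp (-1 * x) = rexp (-x) := by norm_num
  simp only [Pi.add_apply, Real.norm_eq_abs, he, he2]
  linarith

lemma integral_id_gaussianReal (m : ℝ) (hv : v ≠ 0) :
    ∫ x, x ∂(gaussianReal m v) = m := by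
  have h0 : ∫ x, x ∂(gaussianReal 0 v) = 0 := by
    have hmap : (gaussianReal 0 v).map (fun x => (-1 : ℝ) * x) = gaussianReal 0 v := by
      rw [gaussianReal_map_const_mul]
      norm_num
    have key : ∫ y, y ∂((gaussianReal 0 v).map (fun x => (-1:ℝ) * x))
        = ∫ x, (-1:ℝ) * x ∂(gaussianReal 0 v) :=
      integral_map (by fun_prop) (by rw [hmap]; exact aestronglyMeasurable_id)
    rw [hmap] at key
    simp only [neg_one_mul] at key
    rw [integral_neg] at key
    linarith
  have hmap : (gaussianReal 0 v).map (fun x => x + m) = gaussianReal m v := by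
    rw [gaussianReal_map_add_const]; ring_nf
  have key : ∫ y, y ∂((gaussianReal 0 v).map (fun x => x + m))
      = ∫ x, x + m ∂(gaussianReal 0 v) :=
    integral_map (by fun_prop) (by rw [hmap]; exact aestronglyMeasurable_id)
  rw [hmap] at key
  rw [key, integral_add (integrable_id_gaussianReal 0 hv) (integrable_const m), h0,
    integral_const, probReal_univ, one_smul, zero_add]

lemma tilted_gaussianReal (m : ℝ) (hv : v ≠ 0) (c : ℝ) :
    (gaussianReal m v).tilted (fun x => c * x) = gaussianReal (m + c * (v:ℝ)) v := by
  have hV : (0:ℝ) < (v:ℝ) := vpos hv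
  rw [Measure.tilted, integral_exp_mul m hv c, gaussianReal_of_var_ne_zero m hv,
    gaussianReal_of_var_ne_zero (m + c * (v:ℝ)) hv,
    ← withDensity_mul _ (measurable_gaussianPDF m v)
      (by fun_prop : Measurable fun x => ENNReal.ofReal
        (rexp (c * x) / rexp (c * m + c ^ 2 * (v:ℝ) / 2)))]
  congr 1
  funext x
  have hnn := gaussianPDFReal_nonneg m v x
  simp only [Pi.mul_apply, gaussianPDF]
  rw [← ENNReal.ofReal_mul hnn]
  congr 1
  rw [mul_comm, div_mul_eq_mul_div, aux_pdf_mul m hv c x, mul_comm, mul_div_assoc,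
    div_self (Real.exp_pos _).ne', mul_one]

lemma klDiv_cond_shift (m : ℝ) (hv : v ≠ 0) (t : ℝ) :
    (gaussianReal (m + t) v ≪ gaussianReal m v
      ∧ Integrable (llr (gaussianReal (m + t) v) (gaussianReal m v)) (gaussianReal (m + t) v))
    ∧ ∫ x, llr (gaussianReal (m + t) v) (gaussianReal m v) x ∂(gaussianReal (m + t) v)
        = t ^ 2 / (2 * (v:ℝ)) := by
  have hV : (0:ℝ) < (v:ℝ) := vpos hv
  set P := gaussianReal m v
  set Q := gaussianReal (m + t) v with hQ
  set c : ℝ := t / (v:ℝ) with hc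
  have hcv : c * (v:ℝ) = t := div_mul_cancel₀ t hV.ne'
  have htilt : P.tilted (fun x => c * x) = Q := by rw [tilted_gaussianReal m hv c, hcv]
  have hexp : Integrable (fun x => rexp (c * x)) P := integrable_exp_mul m hv c
  have hac : Q ≪ P := htilt ▸ (tilted_absolutelyContinuous P _)
  have hllr : llr Q P =ᵐ[Q] fun x => c * x - log (∫ z, rexp (c * z) ∂P) := by
    have h1 : llr (P.tilted fun x => c * x) P
        =ᵐ[P] fun x => c * x - log (∫ z, rexp (c * z) ∂P) + llr P P x :=
      llr_tilted_left Measure.AbsolutelyContinuous.rfl hexp (by fun_prop)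
    have h2 : llr P P =ᵐ[P] fun _ => 0 := by
      filter_upwards [Measure.rnDeriv_self P] with x hx
      rw [llr, hx]; simp
    rw [htilt] at h1
    have h3 : llr Q P =ᵐ[P] fun x => c * x - log (∫ z, rexp (c * z) ∂P) := by
      filter_upwards [h1, h2] with x h1 h2
      rw [h1, h2, add_zero]
    exact hac.ae_le h3
  have hlog : log (∫ z, rexp (c * z) ∂P) = c * m + c ^ 2 * (v:ℝ) / 2 := by
    rw [integral_exp_mul m hv c, Real.log_exp]
  have hintQ : Integrable (fun x => c * x - log (∫ z, rexp (c * z) ∂P)) Q :=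
    ((integrable_id_gaussianReal (m + t) hv).const_mul c).sub (integrable_const _)
  have hint : Integrable (llr Q P) Q := hintQ.congr hllr.symm
  refine ⟨⟨hac, hint⟩, ?_⟩
  rw [integral_congr_ae hllr, integral_sub ((integrable_id_gaussianReal (m + t) hv).const_mul c)
    (integrable_const _), integral_const_mul, integral_id_gaussianReal (m + t) hv,
    integral_const, probReal_univ, one_smul, hlog, hc]
  field_simp
  ring

variable {α : Type*} [MeasurableSpace α]

lemma integral_llr_nonneg {Q ν : Measure α} [IsProbabilityMeasure Q] [IsProbabilityMeasure ν]
    (hQν : Q ≪ ν) (h_int : Integrable (llr Q ν) Q) : 0 ≤ ∫ x, llr Q ν x ∂Q := by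
  have hexp_int : Integrable (fun x => rexp (- llr Q ν x)) Q := by
    refine (Measure.integrable_toReal_rnDeriv (μ := ν) (ν := Q)).congr ?_
    filter_upwards [exp_neg_llr hQν] with x hx
    exact hx.symm
  have hjen : rexp (∫ x, - llr Q ν x ∂Q) ≤ ∫ x, rexp (- llr Q ν x) ∂Q := by
    refine convexOn_exp.map_integral_le continuous_exp.continuousOn isClosed_univ
      (ae_of_all _ fun _ => mem_univ _) h_int.neg ?_
    exact hexp_int
  have hle : ∫ x, rexp (- llr Q ν x) ∂Q ≤ 1 := by
    have h1 : ∫ x, rexp (- llr Q ν x) ∂Q = ∫ x, (ν.rnDeriv Q x).toReal ∂Q :=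
      integral_congr_ae (exp_neg_llr hQν)
    rw [h1, Measure.integral_toReal_rnDeriv']
    have : (ν.singularPart Q Set.univ).toReal ≥ 0 := ENNReal.toReal_nonneg
    simp only [Measure.real, measure_univ, ENNReal.toReal_one]
    linarith
  have := (Real.exp_le_one_iff).mp (hjen.trans hle)
  rw [integral_neg] at this
  linarith

lemma donsker_varadhan_bound {Q P : Measure α} [IsProbabilityMeasure Q] [IsProbabilityMeasure P]
    (hQP : Q ≪ P) (h_int : Integrable (llr Q P) Q) {g : α → ℝ}
    (hgQ : Integrable g Q) (hgP : Integrable (fun x => rexp (g x)) P) :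
    ∫ x, g x ∂Q ≤ ∫ x, llr Q P x ∂Q + log (∫ x, rexp (g x) ∂P) := by
  have hP : IsProbabilityMeasure (P.tilted g) := isProbabilityMeasure_tilted hgP
  have hac : Q ≪ P.tilted g := hQP.trans (absolutelyContinuous_tilted hgP)
  have hint' : Integrable (llr Q (P.tilted g)) Q :=
    integrable_llr_tilted_right hQP hgQ h_int hgP
  have h0 : 0 ≤ ∫ x, llr Q (P.tilted g) x ∂Q := integral_llr_nonneg hac hint'
  rw [integral_llr_tilted_right hQP hgQ hgP h_int] at h0
  linarith

end GaussAux

/-- **Theorem 2.2(a), one-dimensional form**: for the Gaussian baseline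
`P = gaussianReal m σ²`, the linear QoI `f(x) = a x + b` with `a ≠ 0`, and `η > 0`, the
model uncertainty indices over the KL ambiguity set of size `η` are `±√(2 a² σ² η)`,
and both extrema are attained. -/
theorem gaussian_model_uncertainty_indices
    (m : ℝ) (v : ℝ≥0) (hv : v ≠ 0) (a b : ℝ) (ha : a ≠ 0) (η : ℝ) (hη : 0 < η) :
    IsGreatest {r : ℝ | ∃ Q : Measure ℝ, IsProbabilityMeasure Q ∧
        Q ≪ gaussianReal m v ∧ Integrable (fun x => a * x + b) Q ∧
        klDiv Q (gaussianReal m v) ≤ ((η : ℝ) : EReal) ∧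
        r = ∫ x, (a * x + b) ∂Q - ∫ x, (a * x + b) ∂(gaussianReal m v)}
      (Real.sqrt (2 * a ^ 2 * (v : ℝ) * η)) ∧
    IsLeast {r : ℝ | ∃ Q : Measure ℝ, IsProbabilityMeasure Q ∧
        Q ≪ gaussianReal m v ∧ Integrable (fun x => a * x + b) Q ∧
        klDiv Q (gaussianReal m v) ≤ ((η : ℝ) : EReal) ∧
        r = ∫ x, (a * x + b) ∂Q - ∫ x, (a * x + b) ∂(gaussianReal m v)}
      (-Real.sqrt (2 * a ^ 2 * (v : ℝ) * η)) := by
  have hV : (0:ℝ) < (v:ℝ) := GaussAux.vpos hv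
  set V : ℝ := (v:ℝ) with hVdef
  set P : Measure ℝ := gaussianReal m v with hPdef
  set S : ℝ := Real.sqrt (2 * a ^ 2 * V * η) with hSdef
  -- integral of f over a shifted Gaussian
  have hint_f : ∀ μ₀ : ℝ, ∫ x, (a * x + b) ∂(gaussianReal μ₀ v) = a * μ₀ + b := by
    intro μ₀
    rw [integral_add ((GaussAux.integrable_id_gaussianReal μ₀ hv).const_mul a)
      (integrable_const b), integral_const_mul, GaussAux.integral_id_gaussianReal μ₀ hv,
      integral_const, probReal_univ, one_smul]
  -- membership helper: for t with t^2 = 2 V η, the value a * t is attained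
  have hmem : ∀ t : ℝ, t ^ 2 = 2 * V * η →
      (a * t) ∈ {r : ℝ | ∃ Q : Measure ℝ, IsProbabilityMeasure Q ∧
        Q ≪ gaussianReal m v ∧ Integrable (fun x => a * x + b) Q ∧
        klDiv Q (gaussianReal m v) ≤ ((η : ℝ) : EReal) ∧
        r = ∫ x, (a * x + b) ∂Q - ∫ x, (a * x + b) ∂(gaussianReal m v)} := by
    intro t ht
    refine ⟨gaussianReal (m + t) v, inferInstance, ?_, ?_, ?_, ?_⟩
    · exact (GaussAux.klDiv_cond_shift m hv t).1.1
    · exact ((GaussAux.integrable_id_gaussianReal (m + t) hv).const_mul a).add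
        (integrable_const b)
    · have hcs := GaussAux.klDiv_cond_shift m hv t
      rw [klDiv, if_pos hcs.1, hcs.2]
      have : t ^ 2 / (2 * V) = η := by rw [ht]; field_simp
      rw [this]
    · rw [hint_f (m + t), hint_f m]; ring
  -- the two attained values
  have hS_eq : a * (a * Real.sqrt (2 * V * η) / |a|) = S := by
    have h2 : (0:ℝ) ≤ 2 * V * η := by positivity
    have h1 : a * (a * Real.sqrt (2 * V * η) / |a|)
        = a ^ 2 * Real.sqrt (2 * V * η) / |a| := by ring
    rw [h1, hSdef, show 2 * a ^ 2 * V * η = a ^ 2 * (2 * V * η) by ring,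
      Real.sqrt_mul (sq_nonneg a), Real.sqrt_sq_eq_abs, ← sq_abs]
    have hane : |a| ≠ 0 := abs_ne_zero.mpr ha
    field_simp
  have ht_sq : (a * Real.sqrt (2 * V * η) / |a|) ^ 2 = 2 * V * η := by
    have h2 : (0:ℝ) ≤ 2 * V * η := by positivity
    rw [div_pow, mul_pow, Real.sq_sqrt h2, sq_abs]
    field_simp [pow_ne_zero 2 ha]
  -- upper/lower bound for arbitrary member
  have hbound : ∀ r ∈ {r : ℝ | ∃ Q : Measure ℝ, IsProbabilityMeasure Q ∧
        Q ≪ gaussianReal m v ∧ Integrable (fun x => a * x + b) Q ∧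
        klDiv Q (gaussianReal m v) ≤ ((η : ℝ) : EReal) ∧
        r = ∫ x, (a * x + b) ∂Q - ∫ x, (a * x + b) ∂(gaussianReal m v)}, |r| ≤ S := by
    rintro r ⟨Q, hQprob, hQP, hfQ, hKL, hr⟩
    by_cases hcond : Q ≪ gaussianReal m v ∧ Integrable (llr Q (gaussianReal m v)) Q
    swap
    · rw [klDiv, if_neg hcond] at hKL
      exact absurd hKL (by simp)
    rw [klDiv, if_pos hcond] at hKL
    have hKLr : ∫ x, llr Q (gaussianReal m v) x ∂Q ≤ η := by
      exact_mod_cast hKL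
    have hxQ : Integrable (fun x => x) Q := by
      have h1 : Integrable (fun x => a⁻¹ * ((a * x + b) - b)) Q :=
        (hfQ.sub (integrable_const b)).const_mul a⁻¹
      refine h1.congr (ae_of_all _ fun x => ?_)
      field_simp
      ring
    have hfQ_eq : ∫ x, (a * x + b) ∂Q = a * ∫ x, x ∂Q + b := by
      rw [integral_add (hxQ.const_mul a) (integrable_const b), integral_const_mul,
        integral_const, probReal_univ, one_smul]
    set D : ℝ := ∫ x, x ∂Q - m with hD
    have key : ∀ c : ℝ, c * D ≤ η + c ^ 2 * V / 2 := by
      intro c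
      have hdv := GaussAux.donsker_varadhan_bound hcond.1 hcond.2
        (g := fun x => c * x) (hxQ.const_mul c) (GaussAux.integrable_exp_mul m hv c)
      rw [integral_const_mul, GaussAux.integral_exp_mul m hv c, Real.log_exp] at hdv
      have : c * ∫ x, x ∂Q ≤ η + (c * m + c ^ 2 * V / 2) := by linarith
      rw [hD]; ring_nf; ring_nf at this; linarith
    have hc0 : (0:ℝ) < Real.sqrt (2 * η / V) := Real.sqrt_pos.mpr (by positivity)
    set c₀ : ℝ := Real.sqrt (2 * η / V) with hc₀
    have hc0sq : c₀ ^ 2 = 2 * η / V := Real.sq_sqrt (by positivity)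
    have h2η : η + c₀ ^ 2 * V / 2 = 2 * η := by
      rw [hc0sq]; field_simp; ring
    have hpos : c₀ * D ≤ 2 * η := le_trans (key c₀) h2η.le
    have hneg : -(c₀ * D) ≤ 2 * η := by
      have h := key (-c₀)
      have h' : (-c₀) ^ 2 = c₀ ^ 2 := by ring
      rw [h'] at h
      calc -(c₀ * D) = (-c₀) * D := by ring
        _ ≤ η + c₀ ^ 2 * V / 2 := h
        _ = 2 * η := h2η
    have habsD : c₀ * |D| ≤ 2 * η := by
      rcases abs_cases D with ⟨h, _⟩ | ⟨h, _⟩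
      · rw [h]; exact hpos
      · rw [h]; rw [mul_neg]; linarith
    -- c₀ * S = |a| * (2 * η)
    have hcS : c₀ * S = |a| * (2 * η) := by
      rw [hc₀, hSdef, ← Real.sqrt_mul (by positivity : (0:ℝ) ≤ 2 * η / V)]
      have : 2 * η / V * (2 * a ^ 2 * V * η) = (|a| * (2 * η)) ^ 2 := by
        rw [mul_pow, sq_abs]; field_simp
      rw [this, Real.sqrt_sq (by positivity)]
    have hrD : r = a * D := by
      rw [hr, hfQ_eq, hint_f m, hD]; ring
    have habsr : |r| ≤ S := by
      rw [hrD, abs_mul]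
      by_contra hcon
      push_neg at hcon
      have h1 : c₀ * (|a| * |D|) > c₀ * S := by
        exact (mul_lt_mul_iff_right₀ hc0).mpr hcon
      rw [hcS] at h1
      have h2 : |a| * (c₀ * |D|) ≤ |a| * (2 * η) := by
        exact mul_le_mul_of_nonneg_left habsD (abs_nonneg a)
      nlinarith
    exact habsr
  constructor
  · constructor
    · have := hmem (a * Real.sqrt (2 * V * η) / |a|) ht_sq
      rwa [hS_eq] at this
    · intro r hr
      have := hbound r hr
      exact (abs_le.mp this).2
  · constructor
    · have := hmem (-(a * Real.sqrt (2 * V * η) / |a|)) (by rw [neg_pow]; simp [ht_sq])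
      rw [mul_neg, hS_eq] at this
      exact this
    · intro r hr
      have := hbound r hr
      exact (abs_le.mp this).1
end

section
/- Let μ be a probability measure on X, κ a Markov kernel from X to Y, ν a Markov kernel from X × Y to Z, f : Z → ℝ bounded measurable, F(x, y) := ∫_Z f dν(x, y), and F̄(x, y) := F(x, y) − ∫_Y F(x, y′) κ(x)(dy′) its κ(x)-centered version. Let η > 0. Then for every Markov kernel κ′ from X to Y satisfying kl(κ′(x)‖κ(x)) ≤ η for all x ∈ X: ∫ f(z) d((μ ⊗ κ′) ⊗ ν) − ∫ f(z) d((μ ⊗ κ) ⊗ ν) ≤ ∫_X inf_{c>0} [ (1/c)·log ∫_Y exp(c·F̄(x, y)) κ(x)(dy) + η/c ] μ(dx), where the integrand is interpreted as +∞ at those (x, c) where the exponential moment is infinite, and the outer integral is assumed to be well defined. The analogous lower bound holds with −F̄ and a minus sign. -/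
open MeasureTheory ProbabilityTheory Real Filter Set
open scoped Classical ProbabilityTheory

section helpers
variable {Ω : Type*} [MeasurableSpace Ω]

lemma myIntegrable_of_bound (ρ : Measure Ω) [IsFiniteMeasure ρ] {h : Ω → ℝ}
    (hm : AEStronglyMeasurable h ρ) (B : ℝ) (hB : ∀ ω, |h ω| ≤ B) : Integrable h ρ :=
  Integrable.mono' (integrable_const B) hm
    (ae_of_all _ fun ω => by simpa [Real.norm_eq_abs] using hB ω)

/-- Donsker–Varadhan type inequality. -/
lemma myDV (P Q : Measure Ω) [IsProbabilityMeasure P] [IsProbabilityMeasure Q]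
    (hQP : Q ≪ P) (hllr : Integrable (llr Q P) Q) {h : Ω → ℝ} (hh : Measurable h)
    (B : ℝ) (hB : ∀ ω, |h ω| ≤ B) (hexp : Integrable (fun ω => Real.exp (h ω)) P) :
    ∫ ω, h ω ∂Q ≤ Real.log (∫ ω, Real.exp (h ω) ∂P) + ∫ ω, llr Q P ω ∂Q := by
  set φ : Ω → ℝ := fun ω => h ω - llr Q P ω with hφ
  have hhint : Integrable h Q := myIntegrable_of_bound Q hh.aestronglyMeasurable B hB
  have hφmeas : Measurable φ := hh.sub (measurable_llr Q P)
  have hφint : Integrable φ Q := hhint.sub hllr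
  have hae : ∀ᵐ ω ∂P, Q.rnDeriv P ω * ENNReal.ofReal (Real.exp (φ ω))
      ≤ ENNReal.ofReal (Real.exp (h ω)) := by
    filter_upwards [Measure.rnDeriv_lt_top Q P] with ω hlt
    by_cases hr : Q.rnDeriv P ω = 0
    · simp [hr]
    · have ht : 0 < (Q.rnDeriv P ω).toReal := ENNReal.toReal_pos hr hlt.ne
      have : Real.exp (φ ω) = Real.exp (h ω) / (Q.rnDeriv P ω).toReal := by
        rw [hφ, Real.exp_sub, llr, Real.exp_log ht]
      rw [this, ENNReal.ofReal_div_of_pos ht, ENNReal.ofReal_toReal hlt.ne,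
        ENNReal.div_eq_inv_mul, ← mul_assoc, ENNReal.mul_inv_cancel hr hlt.ne, one_mul]
  have hmeasP : AEMeasurable (fun ω => ENNReal.ofReal (Real.exp (φ ω))) P :=
    (ENNReal.measurable_ofReal.comp (Real.measurable_exp.comp hφmeas)).aemeasurable
  have hchain : ∫⁻ ω, ENNReal.ofReal (Real.exp (φ ω)) ∂Q
      ≤ ENNReal.ofReal (∫ ω, Real.exp (h ω) ∂P) := by
    rw [← MeasureTheory.lintegral_rnDeriv_mul hQP hmeasP]
    calc ∫⁻ ω, Q.rnDeriv P ω * ENNReal.ofReal (Real.exp (φ ω)) ∂P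
        ≤ ∫⁻ ω, ENNReal.ofReal (Real.exp (h ω)) ∂P := lintegral_mono_ae hae
      _ = ENNReal.ofReal (∫ ω, Real.exp (h ω) ∂P) :=
          (ofReal_integral_eq_lintegral_ofReal hexp
            (ae_of_all _ fun ω => (Real.exp_pos _).le)).symm
  have hφexpint : Integrable (fun ω => Real.exp (φ ω)) Q := by
    refine ⟨(Real.measurable_exp.comp hφmeas).aestronglyMeasurable, ?_⟩
    rw [hasFiniteIntegral_iff_ofReal (ae_of_all _ fun ω => (Real.exp_pos _).le)]
    exact lt_of_le_of_lt hchain ENNReal.ofReal_lt_top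
  have hle2 : ∫ ω, Real.exp (φ ω) ∂Q ≤ ∫ ω, Real.exp (h ω) ∂P := by
    rw [← ENNReal.ofReal_le_ofReal_iff (integral_nonneg fun ω => (Real.exp_pos _).le),
      ofReal_integral_eq_lintegral_ofReal hφexpint (ae_of_all _ fun ω => (Real.exp_pos _).le)]
    exact hchain
  have hjen : Real.exp (∫ ω, φ ω ∂Q) ≤ ∫ ω, Real.exp (φ ω) ∂Q := by
    have := convexOn_exp.map_integral_le Real.continuous_exp.continuousOn isClosed_univ
      (ae_of_all _ fun ω => Set.mem_univ (φ ω)) hφint (by exact hφexpint)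
    exact this
  have hpos : 0 < ∫ ω, Real.exp (h ω) ∂P :=
    lt_of_lt_of_le (Real.exp_pos _) (hjen.trans hle2)
  have hkey : ∫ ω, φ ω ∂Q ≤ Real.log (∫ ω, Real.exp (h ω) ∂P) :=
    (Real.le_log_iff_exp_le hpos).mpr (hjen.trans hle2)
  have hsub : ∫ ω, φ ω ∂Q = ∫ ω, h ω ∂Q - ∫ ω, llr Q P ω ∂Q := integral_sub hhint hllr
  linarith

lemma myKlDiv_le_real {Q P : Measure Ω} {η : ℝ} (h : klDiv Q P ≤ ((η : ℝ) : EReal)) :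
    Q ≪ P ∧ Integrable (llr Q P) Q ∧ ∫ ω, llr Q P ω ∂Q ≤ η := by
  by_cases hc : Q ≪ P ∧ Integrable (llr Q P) Q
  · rw [klDiv, if_pos hc] at h
    exact ⟨hc.1, hc.2, by exact_mod_cast h⟩
  · rw [klDiv, if_neg hc] at h
    exact absurd (top_le_iff.mp h) (EReal.coe_ne_top η)

lemma myLe_uqObj (P Q : Measure Ω) [IsProbabilityMeasure P] [IsProbabilityMeasure Q]
    {η : ℝ} (hkl : klDiv Q P ≤ ((η : ℝ) : EReal))
    {g : Ω → ℝ} (hg : Measurable g) (B : ℝ) (hB : ∀ ω, |g ω| ≤ B)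
    {c : ℝ} (hc : 0 < c) :
    ((∫ ω, g ω ∂Q : ℝ) : EReal) ≤ uqObj P g η c := by
  obtain ⟨hac, hllr, hη⟩ := myKlDiv_le_real hkl
  rw [uqObj]
  split_ifs with hint
  · rw [EReal.coe_le_coe_iff]
    have hdv := myDV P Q hac hllr (hg.const_mul c) (|c| * B)
      (fun ω => by rw [abs_mul]; exact mul_le_mul_of_nonneg_left (hB ω) (abs_nonneg c)) hint
    rw [integral_const_mul] at hdv
    have h2 : c * ∫ ω, g ω ∂Q ≤ Real.log (∫ ω, Real.exp (c * g ω) ∂P) + η := by linarith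
    have h3 : ∫ ω, g ω ∂Q ≤ (Real.log (∫ ω, Real.exp (c * g ω) ∂P) + η) / c := by
      rw [le_div_iff₀ hc]; linarith
    calc ∫ ω, g ω ∂Q ≤ (Real.log (∫ ω, Real.exp (c * g ω) ∂P) + η) / c := h3
      _ = 1 / c * Real.log (∫ ω, Real.exp (c * g ω) ∂P) + η / c := by ring
  · exact le_top

end helpers


/-- **Theorem 3.2(a), upper/lower bound direction (kernel form)**: for any Markov kernel
`κ′` with `kl(κ′(x)‖κ(x)) ≤ η` for all `x`, the bias of a bounded QoI of the final
coordinate of the three-stage model is bounded above by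
`∫_X inf_{c>0}[(1/c) log ∫ exp(c F̄(x,y)) κ(x)(dy) + η/c] μ(dx)` (with the integrand
`+∞` where the exponential moment is infinite, the outer integral assumed well defined),
and below by the analogous expression with `−F̄` and a minus sign. -/
theorem model_sensitivity_upper_lower_bounds
    {X Y Z : Type*} [MeasurableSpace X] [MeasurableSpace Y] [MeasurableSpace Z]
    (μ : Measure X) [IsProbabilityMeasure μ]
    (κ : Kernel X Y) [IsMarkovKernel κ]
    (ν : Kernel (X × Y) Z) [IsMarkovKernel ν]
    (f : Z → ℝ) (hf : Measurable f) (C : ℝ) (hfb : ∀ z, |f z| ≤ C)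
    (F Fbar : X → Y → ℝ)
    (hF : F = fun x y => ∫ z, f z ∂(ν (x, y)))
    (hFbar : Fbar = fun x y => F x y - ∫ y', F x y' ∂(κ x))
    (η : ℝ) (hη : 0 < η)
    (g g' : X → ℝ)
    (hg : ∀ x, (g x : EReal) = ⨅ c ∈ Set.Ioi (0 : ℝ), uqObj (κ x) (Fbar x) η c)
    (hg' : ∀ x, (g' x : EReal)
      = ⨅ c ∈ Set.Ioi (0 : ℝ), uqObj (κ x) (fun y => -(Fbar x y)) η c)
    (hgint : Integrable g μ) (hg'int : Integrable g' μ) :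
    ∀ κ' : Kernel X Y, IsMarkovKernel κ' →
      (∀ x, klDiv (κ' x) (κ x) ≤ ((η : ℝ) : EReal)) →
      (∫ p, f p.2 ∂((μ ⊗ₘ κ') ⊗ₘ ν) - ∫ p, f p.2 ∂((μ ⊗ₘ κ) ⊗ₘ ν)
          ≤ ∫ x, g x ∂μ) ∧
      (-∫ x, g' x ∂μ
          ≤ ∫ p, f p.2 ∂((μ ⊗ₘ κ') ⊗ₘ ν) - ∫ p, f p.2 ∂((μ ⊗ₘ κ) ⊗ₘ ν)) := by
  
  intro κ' hκ' hKL
  -- basic facts about F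
  have hFmeas : Measurable fun p : X × Y => F p.1 p.2 := by
    rw [hF]
    exact (StronglyMeasurable.integral_kernel_prod_right' (κ := ν)
      ((hf.comp measurable_snd).stronglyMeasurable)).measurable
  have habs : ∀ (ρ : Measure Z) [IsProbabilityMeasure ρ], |∫ z, f z ∂ρ| ≤ C := by
    intro ρ hρ
    have hfint : Integrable f ρ := myIntegrable_of_bound ρ hf.aestronglyMeasurable C hfb
    calc |∫ z, f z ∂ρ| ≤ ∫ z, |f z| ∂ρ := by
          simpa [Real.norm_eq_abs] using norm_integral_le_integral_norm (μ := ρ) f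
      _ ≤ ∫ _z, C ∂ρ := integral_mono hfint.abs (integrable_const C) hfb
      _ = C := by simp
  have hFb : ∀ x y, |F x y| ≤ C := fun x y => by rw [hF]; exact habs (ν (x, y))
  -- integrability helpers
  have hFint : ∀ (x : X) (ρ : Measure Y) [IsProbabilityMeasure ρ],
      Integrable (fun y => F x y) ρ := by
    intro x ρ _
    exact myIntegrable_of_bound ρ ((hFmeas.comp measurable_prodMk_left).aestronglyMeasurable)
      C (fun y => hFb x y)
  -- D and E
  set D : X → ℝ := fun x => ∫ y, F x y ∂κ' x with hD
  set E : X → ℝ := fun x => ∫ y, F x y ∂κ x with hE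
  have hDmeas : Measurable D :=
    (StronglyMeasurable.integral_kernel_prod_right (κ := κ') hFmeas.stronglyMeasurable).measurable
  have hEmeas : Measurable E :=
    (StronglyMeasurable.integral_kernel_prod_right (κ := κ) hFmeas.stronglyMeasurable).measurable
  have hDb : ∀ x, |D x| ≤ C := fun x => by
    rw [hD]
    calc |∫ y, F x y ∂κ' x| ≤ ∫ y, |F x y| ∂κ' x := by
          simpa [Real.norm_eq_abs] using
            norm_integral_le_integral_norm (μ := κ' x) (fun y => F x y)
      _ ≤ ∫ _y, C ∂κ' x := integral_mono (hFint x (κ' x)).abs (integrable_const C)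
            (fun y => hFb x y)
      _ = C := by simp
  have hEb : ∀ x, |E x| ≤ C := fun x => by
    rw [hE]
    calc |∫ y, F x y ∂κ x| ≤ ∫ y, |F x y| ∂κ x := by
          simpa [Real.norm_eq_abs] using
            norm_integral_le_integral_norm (μ := κ x) (fun y => F x y)
      _ ≤ ∫ _y, C ∂κ x := integral_mono (hFint x (κ x)).abs (integrable_const C)
            (fun y => hFb x y)
      _ = C := by simp
  have hDint : Integrable D μ := myIntegrable_of_bound μ hDmeas.aestronglyMeasurable C hDb
  have hEint : Integrable E μ := myIntegrable_of_bound μ hEmeas.aestronglyMeasurable C hEb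
  -- Fbar facts
  have hFbarmeas : ∀ x, Measurable (Fbar x) := by
    intro x
    rw [hFbar]
    exact (hFmeas.comp measurable_prodMk_left).sub measurable_const
  have hFbarb : ∀ x y, |Fbar x y| ≤ C + C := by
    intro x y
    rw [hFbar]
    exact (abs_sub _ _).trans (add_le_add (hFb x y) (hEb x))
  have hFbarInt : ∀ x, ∫ y, Fbar x y ∂κ' x = D x - E x := by
    intro x
    rw [hFbar]
    rw [integral_sub (hFint x (κ' x)) (integrable_const _)]
    simp [hD, hE]
  -- the main decomposition of the integrals
  have hcomp : ∀ (τ : Kernel X Y) [IsMarkovKernel τ],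
      ∫ p, f p.2 ∂((μ ⊗ₘ τ) ⊗ₘ ν) = ∫ x, ∫ y, F x y ∂τ x ∂μ := by
    intro τ hτ
    have h1 : Integrable (fun p : (X × Y) × Z => f p.2) ((μ ⊗ₘ τ) ⊗ₘ ν) :=
      myIntegrable_of_bound _ ((hf.comp measurable_snd).aestronglyMeasurable) C
        (fun p => hfb p.2)
    have h2 : Integrable (fun q : X × Y => F q.1 q.2) (μ ⊗ₘ τ) :=
      myIntegrable_of_bound _ hFmeas.aestronglyMeasurable C (fun q => hFb q.1 q.2)
    calc ∫ p, f p.2 ∂((μ ⊗ₘ τ) ⊗ₘ ν)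
        = ∫ q, ∫ z, f z ∂ν q ∂(μ ⊗ₘ τ) := Measure.integral_compProd h1
      _ = ∫ q : X × Y, F q.1 q.2 ∂(μ ⊗ₘ τ) := by
          congr 1; funext q; rw [hF]
      _ = ∫ x, ∫ y, F x y ∂τ x ∂μ := Measure.integral_compProd h2
  have hdiff : ∫ p, f p.2 ∂((μ ⊗ₘ κ') ⊗ₘ ν) - ∫ p, f p.2 ∂((μ ⊗ₘ κ) ⊗ₘ ν)
      = ∫ x, (D x - E x) ∂μ := by
    rw [hcomp κ', hcomp κ, ← integral_sub hDint hEint]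
  -- pointwise bounds
  have hup : ∀ x, D x - E x ≤ g x := by
    intro x
    have h1 : ((∫ y, Fbar x y ∂κ' x : ℝ) : EReal) ≤ (g x : EReal) := by
      rw [hg x]
      refine le_iInf₂ fun c hc => ?_
      exact myLe_uqObj (κ x) (κ' x) (hKL x) (hFbarmeas x) (C + C) (hFbarb x) hc
    rw [hFbarInt x] at h1
    exact_mod_cast h1
  have hlow : ∀ x, E x - D x ≤ g' x := by
    intro x
    have h1 : ((∫ y, -Fbar x y ∂κ' x : ℝ) : EReal) ≤ (g' x : EReal) := by
      rw [hg' x]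
      refine le_iInf₂ fun c hc => ?_
      exact myLe_uqObj (κ x) (κ' x) (hKL x) (hFbarmeas x).neg (C + C)
        (fun y => by rw [Pi.neg_apply, abs_neg]; exact hFbarb x y) hc
    rw [integral_neg, hFbarInt x] at h1
    have h2 : -(D x - E x) ≤ g' x := by exact_mod_cast h1
    linarith
  constructor
  · rw [hdiff]
    exact integral_mono (hDint.sub hEint) hgint hup
  · rw [hdiff]
    have : ∫ x, (E x - D x) ∂μ ≤ ∫ x, g' x ∂μ :=
      integral_mono (hEint.sub hDint) hg'int hlow
    rw [integral_sub hEint hDint] at this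
    rw [integral_sub hDint hEint]
    linarith
end
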